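/- arXiv:cs/0607076 — 12 statements merged into one kernel-verified Lean document; each statement's English description precedes it below -/
import Mathlib

section
/- Let α be a real number with 0 < α < 1/2 and let m ≥ 0 be an integer. Then ∑_{i=m}^{2m} C(2m,i) α^i (1−α)^{2m−i} ≤ ((1−α)/(1−2α)) · (4α(1−α))^m, where C(n,k) denotes the binomial coefficient. -/
/-!
Every `C(2m, i)` is at most the central binomial coefficient, hence at most `4 ^ m`. Factoring out
`(1 - α) ^ (2m)` turns the remaining sum into the geometric tail `∑_{i ≥ m} r ^ i` with ratio
`r = α / (1 - α) < 1`, which is at most `r ^ m / (1 - r)`; since `(1 - α) ^ (2m) r ^ m = (α (1 - α)) ^ m`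
and `1 / (1 - r) = (1 - α) / (1 - 2α)`, this is the claimed bound.
-/

open Finset

lemma pow_mul_pow_sub_eq_pow_mul_div_pow {K : Type*} [Field K] (a : K) {b : K} (hb : b ≠ 0)
    {i n : ℕ} (hi : i ≤ n) : a ^ i * b ^ (n - i) = b ^ n * (a / b) ^ i := by
  rw [div_pow, pow_sub₀ b hb hi]
  field_simp

lemma Nat.cast_choose_two_mul_le_four_pow {R : Type*} [Semiring R] [PartialOrder R]
    [IsOrderedRing R] (m i : ℕ) : ((2 * m).choose i : R) ≤ 4 ^ m := by
  simpa using Nat.mono_cast (α := R)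
    ((Nat.choose_le_centralBinom i m).trans (Nat.centralBinom_le_four_pow m))

/-- Bound on the probability that at least half of `2m` indices are incorrect. -/
theorem binomial_tail_bound (α : ℝ) (hα0 : 0 < α) (hα1 : α < 1 / 2) (m : ℕ) :
    ∑ i ∈ Finset.Icc m (2 * m), (Nat.choose (2 * m) i : ℝ) * α ^ i * (1 - α) ^ (2 * m - i) ≤
      (1 - α) / (1 - 2 * α) * (4 * α * (1 - α)) ^ m := by
  have hβ : 0 < 1 - α := by linarith
  have hγ : 1 - 2 * α ≠ 0 := by linarith
  set r := α / (1 - α) with hr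
  have hr0 : 0 ≤ r := div_nonneg hα0.le hβ.le
  have hr1 : r < 1 := (div_lt_one hβ).2 (by linarith)
  calc ∑ i ∈ Icc m (2 * m), (Nat.choose (2 * m) i : ℝ) * α ^ i * (1 - α) ^ (2 * m - i)
      ≤ ∑ i ∈ Icc m (2 * m), 4 ^ m * (1 - α) ^ (2 * m) * r ^ i := by
        refine sum_le_sum fun i hi => ?_
        rw [mul_assoc, pow_mul_pow_sub_eq_pow_mul_div_pow α hβ.ne' (mem_Icc.1 hi).2, ← mul_assoc]
        gcongr
        exact Nat.cast_choose_two_mul_le_four_pow m i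
    _ = 4 ^ m * (1 - α) ^ (2 * m) * ∑ i ∈ Ico m (2 * m + 1), r ^ i := by
        rw [Ico_add_one_right_eq_Icc, mul_sum]
    _ ≤ 4 ^ m * (1 - α) ^ (2 * m) * (r ^ m / (1 - r)) := by
        gcongr
        exact geom_sum_Ico_le_of_lt_one hr0 hr1
    _ = (1 - α) / (1 - 2 * α) * (4 * α * (1 - α)) ^ m := by
        rw [hr, div_pow, one_sub_div hβ.ne', two_mul, pow_add, mul_pow, mul_pow]
        field_simp
        ring
end

section
/- Let α and ε be real numbers with 0 < α < 1/2 and 0 < ε < 1, and let m be a natural number with m ≥ log(((1−2α)/(1−α)) ε) / log(4α(1−α)). Then ∑_{i=m}^{2m} C(2m,i) α^i (1−α)^{2m−i} ≤ ε, where C(n,k) denotes the binomial coefficient. -/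
/-!
Bounding `C(2m, i) ≤ 4^m` and writing `α^i (1-α)^(2m-i) = (1-α)^(2m) r^i` with `r = α/(1-α) < 1`,
the tail is at most `(4(1-α)²)^m r^m / (1 - r) = (4α(1-α))^m (1-α)/(1-2α)`, a geometric series
bound. The hypothesis on `m` says exactly that `(4α(1-α))^m ≤ ε (1-2α)/(1-α)`.
-/

open Finset Real

theorem pow_le_of_log_div_log_le {q c : ℝ} (hq0 : 0 < q) (hq1 : q < 1) (hc : 0 < c) {m : ℕ}
    (hm : log c / log q ≤ m) : q ^ m ≤ c := by
  rw [← rpow_natCast, rpow_le_iff_le_log hq0 hc]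
  exact (div_le_iff_of_neg (log_neg hq0 hq1)).1 hm

theorem sum_Icc_choose_mul_pow_mul_pow_le {p q : ℝ} (hp : 0 ≤ p) (hpq : p < q) (m n : ℕ) :
    ∑ i ∈ Icc m n, (n.choose i : ℝ) * p ^ i * q ^ (n - i)
      ≤ (2 * q) ^ n * (p / q) ^ m / (1 - p / q) := by
  have hq : 0 < q := hp.trans_lt hpq
  have hr0 : 0 ≤ p / q := div_nonneg hp hq.le
  have hr1 : p / q < 1 := (div_lt_one hq).2 hpq
  have hterm : ∀ i ∈ Icc m n,
      (n.choose i : ℝ) * p ^ i * q ^ (n - i) ≤ (2 * q) ^ n * (p / q) ^ i := by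
    intro i hi
    have hin : i ≤ n := (mem_Icc.1 hi).2
    have hpow : p ^ i * q ^ (n - i) = q ^ n * (p / q) ^ i := by
      rw [← pow_mul_pow_sub q hin, div_pow]
      field_simp
    have hchoose : (n.choose i : ℝ) ≤ 2 ^ n := by exact_mod_cast Nat.choose_le_two_pow n i
    calc (n.choose i : ℝ) * p ^ i * q ^ (n - i) = n.choose i * (q ^ n * (p / q) ^ i) := by
          rw [mul_assoc, hpow]
      _ ≤ 2 ^ n * (q ^ n * (p / q) ^ i) := by gcongr
      _ = (2 * q) ^ n * (p / q) ^ i := by rw [mul_pow, mul_assoc]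
  calc ∑ i ∈ Icc m n, (n.choose i : ℝ) * p ^ i * q ^ (n - i)
      ≤ ∑ i ∈ Icc m n, (2 * q) ^ n * (p / q) ^ i := sum_le_sum hterm
    _ = (2 * q) ^ n * ∑ i ∈ Ico m (n + 1), (p / q) ^ i := by
      rw [← mul_sum, Ico_add_one_right_eq_Icc]
    _ ≤ (2 * q) ^ n * ((p / q) ^ m / (1 - p / q)) := by
      gcongr
      exact geom_sum_Ico_le_of_lt_one hr0 hr1
    _ = (2 * q) ^ n * (p / q) ^ m / (1 - p / q) := (mul_div_assoc _ _ _).symm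

theorem binomial_tail_le_eps_general (α ε : ℝ) (hα0 : 0 < α) (hα1 : α < 1 / 2)
    (hε0 : 0 < ε) (m : ℕ)
    (hm : (m : ℝ) ≥ Real.log ((1 - 2 * α) / (1 - α) * ε) / Real.log (4 * α * (1 - α))) :
    ∑ i ∈ Finset.Icc m (2 * m), (Nat.choose (2 * m) i : ℝ) * α ^ i * (1 - α) ^ (2 * m - i)
      ≤ ε := by
  have hα' : 0 < 1 - α := by linarith
  have hc : 0 < (1 - 2 * α) / (1 - α) := div_pos (by linarith) hα'
  -- `4α(1 - α) = 1 - (1 - 2α)²`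
  have hq1 : 4 * α * (1 - α) < 1 := by nlinarith
  have hpow : (4 * α * (1 - α)) ^ m ≤ (1 - 2 * α) / (1 - α) * ε :=
    pow_le_of_log_div_log_le (by positivity) hq1 (mul_pos hc hε0) hm
  have hr : 1 - α / (1 - α) = (1 - 2 * α) / (1 - α) := by field_simp; ring
  calc ∑ i ∈ Icc m (2 * m), ((2 * m).choose i : ℝ) * α ^ i * (1 - α) ^ (2 * m - i)
      ≤ (2 * (1 - α)) ^ (2 * m) * (α / (1 - α)) ^ m / (1 - α / (1 - α)) :=
        sum_Icc_choose_mul_pow_mul_pow_le hα0.le (by linarith) m (2 * m)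
    _ = (4 * α * (1 - α)) ^ m / ((1 - 2 * α) / (1 - α)) := by
        rw [hr, pow_mul, ← mul_pow]
        congr 2
        field_simp
        ring
    _ ≤ ε := div_le_of_le_mul₀ hc.le hε0.le (by linarith)

/-- Quantitative content of Lemma 1's claim that `Pr(𝒜₂) ≤ ε` for large enough `k = 2m`. -/
theorem binomial_tail_le_eps (α ε : ℝ) (hα0 : 0 < α) (hα1 : α < 1 / 2)
    (hε0 : 0 < ε) (hε1 : ε < 1) (m : ℕ)
    (hm : (m : ℝ) ≥ Real.log ((1 - 2 * α) / (1 - α) * ε) / Real.log (4 * α * (1 - α))) :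
    ∑ i ∈ Finset.Icc m (2 * m), (Nat.choose (2 * m) i : ℝ) * α ^ i * (1 - α) ^ (2 * m - i)
      ≤ ε :=
  binomial_tail_le_eps_general α ε hα0 hα1 hε0 m hm
end

section
/- Fix an integer v ≥ 1 and real numbers p1, p2, p3, β with 0 ≤ p1 < 1, 0 ≤ p2 ≤ 1, 0 ≤ p3, p1 + p3 ≤ 1, and 0 ≤ β < 1, and let f, f' be as in the error-probability Bellman recursion. Then for every i < v, f'(i) = f(i) + p2/(1−β); in particular the maximum in the defining equation for f'(i) is attained by its first argument p2 + β f'(i) + (1−β) f(i). -/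
/-!
Put `c = p2 / (1 - β)`. Going backwards from `i = v`, suppose `f'(i+1) ≤ f(i+1) + c`.
Since `f'(i)` dominates the first argument of the max, `f'(i) ≥ f(i) + c`. Subtracting the
equation for `f(i)` shows that the second argument exceeds `f(i)` by
`(1 - p1 - p3)(f'(i+1) - f(i+1)) ≤ c`, while the first exceeds `f(i) + c` by
`β (f'(i) - f(i) - c) ≥ 0`. So the first argument attains the max, and solving
`f'(i) = p2 + β f'(i) + (1 - β) f(i)` gives `f'(i) = f(i) + c`.
-/

namespace ErrorBellman

variable {p1 p2 p3 β x x' y y' : ℝ}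

theorem eq_add_div_and_eq_first_of_le_add_div
    (hp : 0 ≤ p1 + p3) (hp13 : p1 + p3 ≤ 1) (hp2 : 0 ≤ p2) (hβ0 : 0 ≤ β) (hβ1 : β < 1)
    (hx : x = p3 + (1 - p1 - p3) * y + p1 * β * x' + p1 * (1 - β) * x)
    (hx' : x' = max (p2 + β * x' + (1 - β) * x)
      (p3 + (1 - p1 - p3) * y' + p1 * β * x' + p1 * (1 - β) * x))
    (hy : y' ≤ y + p2 / (1 - β)) :
    x' = x + p2 / (1 - β) ∧ x' = p2 + β * x' + (1 - β) * x := by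
  have hβ : 0 < 1 - β := sub_pos.2 hβ1
  set c := p2 / (1 - β)
  have hc : (1 - β) * c = p2 := mul_div_cancel₀ p2 hβ.ne'
  have hc0 : 0 ≤ c := div_nonneg hp2 hβ.le
  have hfirst_le : p2 + β * x' + (1 - β) * x ≤ x' := (le_max_left _ _).trans hx'.ge
  have hlower : x + c ≤ x' :=
    le_of_mul_le_mul_left (by linear_combination hfirst_le + hc) hβ
  have hsecond : p3 + (1 - p1 - p3) * y' + p1 * β * x' + p1 * (1 - β) * x ≤ x + c := by
    nlinarith [mul_le_mul_of_nonneg_left hy (sub_nonneg.2 hp13 : 0 ≤ 1 - (p1 + p3)),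
      mul_nonneg hp hc0]
  have hfirst_ge : x + c ≤ p2 + β * x' + (1 - β) * x := by
    nlinarith [mul_nonneg hβ0 (sub_nonneg.2 hlower)]
  have hmax : x' = p2 + β * x' + (1 - β) * x := hx'.trans (max_eq_left (hsecond.trans hfirst_ge))
  refine ⟨mul_left_cancel₀ hβ.ne' ?_, hmax⟩
  linear_combination hmax - hc

end ErrorBellman

theorem error_bellman_max_first_general (v : ℕ) (p1 p2 p3 β : ℝ)
    (hp10 : 0 ≤ p1) (hp20 : 0 ≤ p2)
    (hp30 : 0 ≤ p3) (hp13 : p1 + p3 ≤ 1) (hβ0 : 0 ≤ β) (hβ1 : β < 1)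
    (f f' : ℕ → ℝ)
    (hfv : f v = 0) (hf'v : f' v = 0)
    (hfrec : ∀ i < v,
      f i = p3 + (1 - p1 - p3) * f (i + 1) + p1 * β * f' i + p1 * (1 - β) * f i)
    (hf'rec : ∀ i < v,
      f' i = max (p2 + β * f' i + (1 - β) * f i)
        (p3 + (1 - p1 - p3) * f' (i + 1) + p1 * β * f' i + p1 * (1 - β) * f i)) :
    ∀ i < v, f' i = f i + p2 / (1 - β) ∧ f' i = p2 + β * f' i + (1 - β) * f i := by
  have step : ∀ i < v, f' (i + 1) ≤ f (i + 1) + p2 / (1 - β) →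
      f' i = f i + p2 / (1 - β) ∧ f' i = p2 + β * f' i + (1 - β) * f i := fun i hi =>
    ErrorBellman.eq_add_div_and_eq_first_of_le_add_div (add_nonneg hp10 hp30) hp13 hp20 hβ0 hβ1
      (hfrec i hi) (hf'rec i hi)
  have bound : ∀ i ≤ v, f' i ≤ f i + p2 / (1 - β) := fun i hi =>
    Nat.decreasingInduction (motive := fun i _ => f' i ≤ f i + p2 / (1 - β))
      (fun j hj h => (step j hj h).1.le)
      (by rw [hfv, hf'v, zero_add]; exact div_nonneg hp20 (sub_nonneg.2 hβ1.le)) hi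
  exact fun i hi => step i hi (bound (i + 1) hi)

/-- In the error-probability Bellman recursion, the maximum is attained by its first
argument, and `f'(i) = f(i) + p2/(1-β)` for every `i < v`. -/
theorem error_bellman_max_first (v : ℕ) (hv : 1 ≤ v) (p1 p2 p3 β : ℝ)
    (hp10 : 0 ≤ p1) (hp11 : p1 < 1) (hp20 : 0 ≤ p2) (hp21 : p2 ≤ 1)
    (hp30 : 0 ≤ p3) (hp13 : p1 + p3 ≤ 1) (hβ0 : 0 ≤ β) (hβ1 : β < 1)
    (f f' : ℕ → ℝ) (hf : ∀ i, 0 ≤ f i) (hf' : ∀ i, 0 ≤ f' i)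
    (hfv : f v = 0) (hf'v : f' v = 0)
    (hfrec : ∀ i < v,
      f i = p3 + (1 - p1 - p3) * f (i + 1) + p1 * β * f' i + p1 * (1 - β) * f i)
    (hf'rec : ∀ i < v,
      f' i = max (p2 + β * f' i + (1 - β) * f i)
        (p3 + (1 - p1 - p3) * f' (i + 1) + p1 * β * f' i + p1 * (1 - β) * f i)) :
    ∀ i < v, f' i = f i + p2 / (1 - β) ∧ f' i = p2 + β * f' i + (1 - β) * f i :=
  error_bellman_max_first_general v p1 p2 p3 β hp10 hp20 hp30 hp13 hβ0 hβ1 f f' hfv hf'v hfrec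
    hf'rec
end

section
/- Fix an integer v ≥ 1 and real numbers p1, p2, p3, β with 0 ≤ p1 < 1, 0 ≤ p2 ≤ 1, 0 ≤ p3, p1 + p3 ≤ 1, and 0 ≤ β < 1, and let f, f' be as in the error-probability Bellman recursion. Then for every i < v, f(i) = p3/(1−p1) + p1 p2 β/((1−p1)(1−β)) + ((1−p1−p3)/(1−p1)) · f(i+1). -/
/-!
Write `c = p₂ / (1 - β)` for the gap `f' i - f i`. The first branch of the maximum always
gives `f' i - f i ≥ c`. Subtracting the two recursions shows that at each `i < v` the gap either
equals `c` (first branch attained) or equals `(1 - p₁ - p₃)` times the gap at `i + 1` (second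
branch attained); since the gap vanishes at `v` and `0 ≤ 1 - p₁ - p₃ ≤ 1`, downward induction
gives `f' i - f i ≤ c`. Hence `f' i = f i + c`, and substituting into the recursion for `f`
yields the one-step relation.
-/

lemma le_of_forall_eq_or_eq_mul_succ {g : ℕ → ℝ} {a c : ℝ} {v : ℕ} (ha₀ : 0 ≤ a) (ha₁ : a ≤ 1)
    (hc : 0 ≤ c) (hv : g v ≤ c) (hstep : ∀ i < v, g i = c ∨ g i = a * g (i + 1)) :
    ∀ i ≤ v, g i ≤ c := by
  intro i hi
  induction hi using Nat.decreasingInduction with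
  | self => exact hv
  | of_succ i hiv ih =>
    rcases hstep i hiv with h | h
    · exact h.le
    · calc g i = a * g (i + 1) := h
        _ ≤ a * c := mul_le_mul_of_nonneg_left ih ha₀
        _ ≤ c := mul_le_of_le_one_left hc ha₁

lemma div_le_sub_of_eq_max {p β x y z : ℝ} (hβ : β < 1)
    (h : x = max (p + β * x + (1 - β) * y) z) : p / (1 - β) ≤ x - y := by
  have hle : p + β * x + (1 - β) * y ≤ x := (le_max_left _ z).trans_eq h.symm
  rw [div_le_iff₀ (by linarith)]
  linarith

lemma bellman_gap_eq_or_eq_mul {p₁ p₂ p₃ β x x' y y' : ℝ} (hβ : β < 1)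
    (hx : x = p₃ + (1 - p₁ - p₃) * y + p₁ * β * x' + p₁ * (1 - β) * x)
    (hx' : x' = max (p₂ + β * x' + (1 - β) * x)
      (p₃ + (1 - p₁ - p₃) * y' + p₁ * β * x' + p₁ * (1 - β) * x)) :
    x' - x = p₂ / (1 - β) ∨ x' - x = (1 - p₁ - p₃) * (y' - y) := by
  rcases max_choice (p₂ + β * x' + (1 - β) * x)
      (p₃ + (1 - p₁ - p₃) * y' + p₁ * β * x' + p₁ * (1 - β) * x) with h | h <;> rw [h] at hx'
  · left
    rw [eq_div_iff (by linarith)]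
    linarith
  · right
    linear_combination hx' - hx

lemma bellman_eq_of_gap_eq {p₁ p₂ p₃ β x x' y : ℝ} (hp₁ : p₁ < 1) (hβ : β < 1)
    (hx : x = p₃ + (1 - p₁ - p₃) * y + p₁ * β * x' + p₁ * (1 - β) * x)
    (hgap : x' = x + p₂ / (1 - β)) :
    x = p₃ / (1 - p₁) + p₁ * p₂ * β / ((1 - p₁) * (1 - β)) + (1 - p₁ - p₃) / (1 - p₁) * y := by
  have hp₁' : 1 - p₁ ≠ 0 := by linarith
  have hβ' : 1 - β ≠ 0 := by linarith
  rw [hgap] at hx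
  field_simp at hx ⊢
  linear_combination hx

theorem error_bellman_step_general (v : ℕ) (p1 p2 p3 β : ℝ)
    (hp10 : 0 ≤ p1) (hp11 : p1 < 1) (hp20 : 0 ≤ p2)
    (hp30 : 0 ≤ p3) (hp13 : p1 + p3 ≤ 1) (hβ1 : β < 1)
    (f f' : ℕ → ℝ)
    (hfv : f v = 0) (hf'v : f' v = 0)
    (hfrec : ∀ i < v,
      f i = p3 + (1 - p1 - p3) * f (i + 1) + p1 * β * f' i + p1 * (1 - β) * f i)
    (hf'rec : ∀ i < v,
      f' i = max (p2 + β * f' i + (1 - β) * f i)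
        (p3 + (1 - p1 - p3) * f' (i + 1) + p1 * β * f' i + p1 * (1 - β) * f i)) :
    ∀ i < v, f i = p3 / (1 - p1) + p1 * p2 * β / ((1 - p1) * (1 - β))
      + (1 - p1 - p3) / (1 - p1) * f (i + 1) := by
  have hc : 0 ≤ p2 / (1 - β) := div_nonneg hp20 (by linarith)
  have hgap_le : ∀ i ≤ v, f' i - f i ≤ p2 / (1 - β) :=
    le_of_forall_eq_or_eq_mul_succ (by linarith) (by linarith) hc (by simpa [hfv, hf'v] using hc)
      fun i hi => bellman_gap_eq_or_eq_mul hβ1 (hfrec i hi) (hf'rec i hi)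
  intro i hi
  have hgap : f' i = f i + p2 / (1 - β) := by
    linarith [hgap_le i hi.le, div_le_sub_of_eq_max hβ1 (hf'rec i hi)]
  exact bellman_eq_of_gap_eq hp11 hβ1 (hfrec i hi) hgap

/-- One-step relation for `f` in the error-probability Bellman recursion. -/
theorem error_bellman_step (v : ℕ) (hv : 1 ≤ v) (p1 p2 p3 β : ℝ)
    (hp10 : 0 ≤ p1) (hp11 : p1 < 1) (hp20 : 0 ≤ p2) (hp21 : p2 ≤ 1)
    (hp30 : 0 ≤ p3) (hp13 : p1 + p3 ≤ 1) (hβ0 : 0 ≤ β) (hβ1 : β < 1)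
    (f f' : ℕ → ℝ) (hf : ∀ i, 0 ≤ f i) (hf' : ∀ i, 0 ≤ f' i)
    (hfv : f v = 0) (hf'v : f' v = 0)
    (hfrec : ∀ i < v,
      f i = p3 + (1 - p1 - p3) * f (i + 1) + p1 * β * f' i + p1 * (1 - β) * f i)
    (hf'rec : ∀ i < v,
      f' i = max (p2 + β * f' i + (1 - β) * f i)
        (p3 + (1 - p1 - p3) * f' (i + 1) + p1 * β * f' i + p1 * (1 - β) * f i)) :
    ∀ i < v, f i = p3 / (1 - p1) + p1 * p2 * β / ((1 - p1) * (1 - β))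
      + (1 - p1 - p3) / (1 - p1) * f (i + 1) :=
  error_bellman_step_general v p1 p2 p3 β hp10 hp11 hp20 hp30 hp13 hβ1 f f' hfv hf'v hfrec hf'rec
end

section
/- Fix an integer v ≥ 1 and real numbers p1, p2, p3, β with 0 ≤ p1 < 1, 0 ≤ p2 ≤ 1, 0 ≤ p3, p1 + p3 ≤ 1, and 0 ≤ β < 1, and let f, f' be as in the error-probability Bellman recursion. Then for every i ≤ v, 0 ≤ f(i) ≤ (p3/(1−p1) + p1 p2 β/((1−p1)(1−β))) · (v − i). -/
/-!
The gap `f' i - f i` never exceeds `p2 / (1 - β)`: when the first branch of the maximum is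
active the gap equals that value, and otherwise it is the gap at `i + 1` damped by
`1 - p1 - p3 ∈ [0, 1]`. Eliminating `f'` from the equation for `f` through this bound gives
`f i ≤ C + c · f (i + 1)` with `C` the claimed slope and `c = (1 - p1 - p3) / (1 - p1) ∈ [0, 1]`,
and backward induction from `f v = 0` yields `f i ≤ C · (v - i)`.
-/

section BackwardInduction

variable {v : ℕ} {u : ℕ → ℝ} {c : ℝ}

theorem le_of_le_max_mul_succ {B : ℝ} (hB : 0 ≤ B) (hc0 : 0 ≤ c) (hc1 : c ≤ 1) (hv : u v ≤ B)
    (hstep : ∀ i < v, u i ≤ max B (c * u (i + 1))) {i : ℕ} (hi : i ≤ v) : u i ≤ B := by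
  induction hi using Nat.decreasingInduction with
  | self => exact hv
  | of_succ k hk ih =>
    have : c * u (k + 1) ≤ B := by nlinarith [mul_le_mul_of_nonneg_left ih hc0]
    exact (hstep k hk).trans (max_le le_rfl this)

theorem le_mul_sub_of_le_add_mul_succ {a : ℝ} (ha : 0 ≤ a) (hc0 : 0 ≤ c) (hc1 : c ≤ 1)
    (hv : u v ≤ 0) (hstep : ∀ i < v, u i ≤ a + c * u (i + 1)) {i : ℕ} (hi : i ≤ v) :
    u i ≤ a * ((v : ℝ) - i) := by
  induction hi using Nat.decreasingInduction with
  | self => simpa using hv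
  | of_succ k hk ih =>
    have hrest : 0 ≤ a * ((v : ℝ) - (k + 1 : ℕ)) :=
      mul_nonneg ha (sub_nonneg.mpr (Nat.cast_le.mpr hk))
    calc u k ≤ a + c * u (k + 1) := hstep k hk
      _ ≤ a + c * (a * ((v : ℝ) - (k + 1 : ℕ))) := by gcongr
      _ ≤ a + a * ((v : ℝ) - (k + 1 : ℕ)) := by nlinarith
      _ = a * ((v : ℝ) - k) := by push_cast; ring

end BackwardInduction

section Bellman

variable {p1 p2 p3 β : ℝ} {f f' : ℕ → ℝ} {i : ℕ}

theorem bellman_gap_le_max (hβ1 : β < 1)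
    (hfi : f i = p3 + (1 - p1 - p3) * f (i + 1) + p1 * β * f' i + p1 * (1 - β) * f i)
    (hf'i : f' i = max (p2 + β * f' i + (1 - β) * f i)
      (p3 + (1 - p1 - p3) * f' (i + 1) + p1 * β * f' i + p1 * (1 - β) * f i)) :
    f' i - f i ≤ max (p2 / (1 - β)) ((1 - p1 - p3) * (f' (i + 1) - f (i + 1))) := by
  rcases max_choice (p2 + β * f' i + (1 - β) * f i)
      (p3 + (1 - p1 - p3) * f' (i + 1) + p1 * β * f' i + p1 * (1 - β) * f i) with h | h
  · have : f' i - f i = p2 / (1 - β) := by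
      rw [eq_div_iff (by linarith)]
      linear_combination hf'i.trans h
    exact this.trans_le (le_max_left _ _)
  · have : f' i - f i = (1 - p1 - p3) * (f' (i + 1) - f (i + 1)) := by
      linear_combination hf'i.trans h - hfi
    exact this.trans_le (le_max_right _ _)

theorem bellman_le_add_mul_succ (hp10 : 0 ≤ p1) (hp11 : p1 < 1) (hβ0 : 0 ≤ β) (hβ1 : β < 1)
    (hgap : f' i - f i ≤ p2 / (1 - β))
    (hfi : f i = p3 + (1 - p1 - p3) * f (i + 1) + p1 * β * f' i + p1 * (1 - β) * f i) :
    f i ≤ (p3 / (1 - p1) + p1 * p2 * β / ((1 - p1) * (1 - β)))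
      + (1 - p1 - p3) / (1 - p1) * f (i + 1) := by
  have h1 : 0 < 1 - p1 := by linarith
  have hb : 0 < 1 - β := by linarith
  have hdamp : p1 * β * (f' i - f i) ≤ p1 * β * (p2 / (1 - β)) :=
    mul_le_mul_of_nonneg_left hgap (mul_nonneg hp10 hβ0)
  have hrhs : (p3 / (1 - p1) + p1 * p2 * β / ((1 - p1) * (1 - β)))
      + (1 - p1 - p3) / (1 - p1) * f (i + 1)
      = (p3 + (1 - p1 - p3) * f (i + 1) + p1 * β * (p2 / (1 - β))) / (1 - p1) := by
    field_simp
    ring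
  rw [hrhs, le_div_iff₀ h1]
  linear_combination hfi + hdamp

end Bellman

theorem error_bellman_linear_bound_general (v : ℕ) (p1 p2 p3 β : ℝ)
    (hp10 : 0 ≤ p1) (hp11 : p1 < 1) (hp20 : 0 ≤ p2)
    (hp30 : 0 ≤ p3) (hp13 : p1 + p3 ≤ 1) (hβ0 : 0 ≤ β) (hβ1 : β < 1)
    (f f' : ℕ → ℝ) (hf : ∀ i, 0 ≤ f i)
    (hfv : f v = 0) (hf'v : f' v = 0)
    (hfrec : ∀ i < v,
      f i = p3 + (1 - p1 - p3) * f (i + 1) + p1 * β * f' i + p1 * (1 - β) * f i)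
    (hf'rec : ∀ i < v,
      f' i = max (p2 + β * f' i + (1 - β) * f i)
        (p3 + (1 - p1 - p3) * f' (i + 1) + p1 * β * f' i + p1 * (1 - β) * f i)) :
    ∀ i ≤ v, 0 ≤ f i ∧
      f i ≤ (p3 / (1 - p1) + p1 * p2 * β / ((1 - p1) * (1 - β))) * ((v : ℝ) - i) := by
  have h1 : 0 < 1 - p1 := by linarith
  have hb : 0 < 1 - β := by linarith
  have hgap : ∀ i ≤ v, f' i - f i ≤ p2 / (1 - β) :=
    fun i hi => le_of_le_max_mul_succ (div_nonneg hp20 hb.le) (by linarith) (by linarith)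
      (by simp [hfv, hf'v, div_nonneg hp20 hb.le])
      (fun k hk => bellman_gap_le_max hβ1 (hfrec k hk) (hf'rec k hk)) hi
  intro i hi
  refine ⟨hf i, le_mul_sub_of_le_add_mul_succ (by positivity)
    (div_nonneg (by linarith) h1.le) ((div_le_one h1).mpr (by linarith)) hfv.le
    (fun k hk => bellman_le_add_mul_succ hp10 hp11 hβ0 hβ1 (hgap k hk.le) (hfrec k hk)) hi⟩

/-- Linear bound on `f` in the error-probability Bellman recursion. -/
theorem error_bellman_linear_bound (v : ℕ) (hv : 1 ≤ v) (p1 p2 p3 β : ℝ)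
    (hp10 : 0 ≤ p1) (hp11 : p1 < 1) (hp20 : 0 ≤ p2) (hp21 : p2 ≤ 1)
    (hp30 : 0 ≤ p3) (hp13 : p1 + p3 ≤ 1) (hβ0 : 0 ≤ β) (hβ1 : β < 1)
    (f f' : ℕ → ℝ) (hf : ∀ i, 0 ≤ f i) (hf' : ∀ i, 0 ≤ f' i)
    (hfv : f v = 0) (hf'v : f' v = 0)
    (hfrec : ∀ i < v,
      f i = p3 + (1 - p1 - p3) * f (i + 1) + p1 * β * f' i + p1 * (1 - β) * f i)
    (hf'rec : ∀ i < v,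
      f' i = max (p2 + β * f' i + (1 - β) * f i)
        (p3 + (1 - p1 - p3) * f' (i + 1) + p1 * β * f' i + p1 * (1 - β) * f i)) :
    ∀ i ≤ v, 0 ≤ f i ∧
      f i ≤ (p3 / (1 - p1) + p1 * p2 * β / ((1 - p1) * (1 - β))) * ((v : ℝ) - i) :=
  error_bellman_linear_bound_general v p1 p2 p3 β hp10 hp11 hp20 hp30 hp13 hβ0 hβ1 f f' hf hfv hf'v
    hfrec hf'rec
end

section
/- Fix an integer v ≥ 1 and real numbers p1, p2, p3, β with 0 ≤ p1 < 1, 0 ≤ p2 ≤ 1, 0 ≤ p3, p1 + p3 ≤ 1, and 0 ≤ β < 1, and let f, f' be as in the error-probability Bellman recursion. Then (1−β) f(0) + β f'(0) ≤ (p1 p2 β + p3 (1−β)) · v / ((1−p1)(1−β)) + p2 β/(1−β). -/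
/-!
Backward induction from the terminal state `v`: every remaining step adds at most
`C = (p₁p₂β + p₃(1-β)) / ((1-p₁)(1-β))` to the error, and starting from a Byzantine
sensor costs at most `D = p₂ / (1-β)` on top, i.e. `f(v-k) ≤ C k` and `f'(v-k) ≤ C k + D`.
If the verifying branch attains the maximum, the Bellman equation for `f'` forces
`f' = f + D`; otherwise `(f, f')` solves a linear system whose solution, scaled by `1-p₁`,
is a combination with nonnegative coefficients of the two continuation values.
-/

namespace ErrorBellman

variable {p1 p2 p3 β : ℝ}

noncomputable def byzantineExcess (p2 β : ℝ) : ℝ := p2 / (1 - β)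

noncomputable def errorPerStep (p1 p2 p3 β : ℝ) : ℝ :=
  (p1 * p2 * β + p3 * (1 - β)) / ((1 - p1) * (1 - β))

lemma byzantineExcess_nonneg (hp2 : 0 ≤ p2) (hβ1 : β < 1) : 0 ≤ byzantineExcess p2 β :=
  div_nonneg hp2 (by linarith)

lemma one_sub_mul_byzantineExcess (hβ1 : β < 1) : (1 - β) * byzantineExcess p2 β = p2 := by
  rw [byzantineExcess]
  field_simp [(by linarith : 1 - β ≠ 0)]

lemma one_sub_mul_errorPerStep (hp1 : p1 < 1) (hβ1 : β < 1) :
    (1 - p1) * errorPerStep p1 p2 p3 β = p3 + p1 * β * byzantineExcess p2 β := by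
  rw [errorPerStep, byzantineExcess]
  field_simp [(by linarith : 1 - p1 ≠ 0), (by linarith : 1 - β ≠ 0)]
  ring

lemma continuation_le {u c : ℝ} (hp1 : p1 < 1) (hp3 : 0 ≤ p3) (hu : 0 ≤ u) (huc : u ≤ c) :
    p3 + (1 - p1 - p3) * u ≤ p3 + (1 - p1) * c := by
  nlinarith

lemma step_le_of_verify {a X Y c : ℝ} (hp1 : p1 < 1) (hβ1 : β < 1)
    (ha : a ≤ p3 + (1 - p1) * c)
    (hX : X = a + p1 * β * Y + p1 * (1 - β) * X) (hY : Y = p2 + β * Y + (1 - β) * X) :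
    X ≤ c + errorPerStep p1 p2 p3 β ∧
      Y ≤ c + errorPerStep p1 p2 p3 β + byzantineExcess p2 β := by
  have hD := one_sub_mul_byzantineExcess (p2 := p2) hβ1
  have hC := one_sub_mul_errorPerStep (p2 := p2) (p3 := p3) hp1 hβ1
  have hYX : Y = X + byzantineExcess p2 β :=
    mul_left_cancel₀ (by linarith : 1 - β ≠ 0) (by linear_combination hY - hD)
  have hXle : X ≤ c + errorPerStep p1 p2 p3 β :=
    le_of_mul_le_mul_left (a := 1 - p1) (by linear_combination ha + hX + p1 * β * hYX - hC)
      (by linarith)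
  exact ⟨hXle, by linarith⟩

lemma step_le_of_continue {a b X Y c : ℝ} (hp10 : 0 ≤ p1) (hp1 : p1 < 1) (hp2 : 0 ≤ p2)
    (hβ0 : 0 ≤ β) (hβ1 : β < 1)
    (ha : a ≤ p3 + (1 - p1) * c) (hb : b ≤ p3 + (1 - p1) * (c + byzantineExcess p2 β))
    (hX : X = a + p1 * β * Y + p1 * (1 - β) * X) (hY : Y = b + p1 * β * Y + p1 * (1 - β) * X) :
    X ≤ c + errorPerStep p1 p2 p3 β ∧
      Y ≤ c + errorPerStep p1 p2 p3 β + byzantineExcess p2 β := by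
  set D := byzantineExcess p2 β
  have hC := one_sub_mul_errorPerStep (p2 := p2) (p3 := p3) hp1 hβ1
  have hD : 0 ≤ D := byzantineExcess_nonneg hp2 hβ1
  have hpβ : p1 * β ≤ 1 := mul_le_one₀ hp1.le hβ0 hβ1.le
  have hpβ' : p1 * (1 - β) ≤ 1 := mul_le_one₀ hp1.le (by linarith) (by linarith)
  have hsolX : (1 - p1) * X = (1 - p1 * β) * a + p1 * β * b := by
    linear_combination (1 - p1 * β) * hX + p1 * β * hY
  have hsolY : (1 - p1) * Y = p1 * (1 - β) * a + (1 - p1 * (1 - β)) * b := by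
    linear_combination p1 * (1 - β) * hX + (1 - p1 * (1 - β)) * hY
  have hXle : (1 - p1) * X ≤ (1 - p1) * (c + errorPerStep p1 p2 p3 β) := by
    rw [hsolX]
    nlinarith [mul_le_mul_of_nonneg_left ha (by linarith : 0 ≤ 1 - p1 * β),
      mul_le_mul_of_nonneg_left hb (mul_nonneg hp10 hβ0), mul_nonneg (mul_nonneg hp10 hβ0) hD]
  have hYle : (1 - p1) * Y ≤ (1 - p1) * (c + errorPerStep p1 p2 p3 β + D) := by
    rw [hsolY]
    nlinarith [mul_le_mul_of_nonneg_left ha (mul_nonneg hp10 (by linarith : 0 ≤ 1 - β)),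
      mul_le_mul_of_nonneg_left hb (by linarith : 0 ≤ 1 - p1 * (1 - β)),
      mul_nonneg (mul_nonneg hp10 hβ0) hD,
      mul_nonneg (mul_nonneg (mul_nonneg hp10 (by linarith : 0 ≤ 1 - β))
        (by linarith : 0 ≤ 1 - p1)) hD]
  exact ⟨le_of_mul_le_mul_left hXle (by linarith), le_of_mul_le_mul_left hYle (by linarith)⟩

lemma step_le {u u' X Y c : ℝ} (hp10 : 0 ≤ p1) (hp1 : p1 < 1) (hp2 : 0 ≤ p2) (hp3 : 0 ≤ p3)
    (hβ0 : 0 ≤ β) (hβ1 : β < 1) (hu : 0 ≤ u) (hu' : 0 ≤ u') (huc : u ≤ c)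
    (hu'c : u' ≤ c + byzantineExcess p2 β)
    (hX : X = p3 + (1 - p1 - p3) * u + p1 * β * Y + p1 * (1 - β) * X)
    (hY : Y = max (p2 + β * Y + (1 - β) * X)
      (p3 + (1 - p1 - p3) * u' + p1 * β * Y + p1 * (1 - β) * X)) :
    X ≤ c + errorPerStep p1 p2 p3 β ∧
      Y ≤ c + errorPerStep p1 p2 p3 β + byzantineExcess p2 β := by
  have ha := continuation_le hp1 hp3 hu huc
  rcases max_choice (p2 + β * Y + (1 - β) * X)
    (p3 + (1 - p1 - p3) * u' + p1 * β * Y + p1 * (1 - β) * X) with hmax | hmax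
  · exact step_le_of_verify hp1 hβ1 ha (by linarith) (hmax ▸ hY)
  · exact step_le_of_continue hp10 hp1 hp2 hβ0 hβ1 ha (continuation_le hp1 hp3 hu' hu'c)
      (by linarith) (by linarith [hmax ▸ hY])

lemma bellman_le {v : ℕ} {f f' : ℕ → ℝ} (hp10 : 0 ≤ p1) (hp1 : p1 < 1) (hp2 : 0 ≤ p2)
    (hp3 : 0 ≤ p3) (hβ0 : 0 ≤ β) (hβ1 : β < 1) (hf : ∀ i, 0 ≤ f i) (hf' : ∀ i, 0 ≤ f' i)
    (hfv : f v = 0) (hf'v : f' v = 0)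
    (hfrec : ∀ i < v,
      f i = p3 + (1 - p1 - p3) * f (i + 1) + p1 * β * f' i + p1 * (1 - β) * f i)
    (hf'rec : ∀ i < v,
      f' i = max (p2 + β * f' i + (1 - β) * f i)
        (p3 + (1 - p1 - p3) * f' (i + 1) + p1 * β * f' i + p1 * (1 - β) * f i))
    (k i : ℕ) (hik : i + k = v) :
    f i ≤ errorPerStep p1 p2 p3 β * k ∧
      f' i ≤ errorPerStep p1 p2 p3 β * k + byzantineExcess p2 β := by
  induction k generalizing i with
  | zero =>
    obtain rfl : i = v := hik
    simp [hfv, hf'v, byzantineExcess_nonneg hp2 hβ1]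
  | succ k ih =>
    have hiv : i < v := by omega
    obtain ⟨hnext, hnext'⟩ := ih (i + 1) (by omega)
    push_cast
    rw [mul_add_one]
    exact step_le hp10 hp1 hp2 hp3 hβ0 hβ1 (hf _) (hf' _) hnext hnext' (hfrec i hiv)
      (hf'rec i hiv)

end ErrorBellman

open ErrorBellman in
theorem error_bellman_total_bound_general (v : ℕ) (p1 p2 p3 β : ℝ)
    (hp10 : 0 ≤ p1) (hp11 : p1 < 1) (hp20 : 0 ≤ p2)
    (hp30 : 0 ≤ p3) (hβ0 : 0 ≤ β) (hβ1 : β < 1)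
    (f f' : ℕ → ℝ) (hf : ∀ i, 0 ≤ f i) (hf' : ∀ i, 0 ≤ f' i)
    (hfv : f v = 0) (hf'v : f' v = 0)
    (hfrec : ∀ i < v,
      f i = p3 + (1 - p1 - p3) * f (i + 1) + p1 * β * f' i + p1 * (1 - β) * f i)
    (hf'rec : ∀ i < v,
      f' i = max (p2 + β * f' i + (1 - β) * f i)
        (p3 + (1 - p1 - p3) * f' (i + 1) + p1 * β * f' i + p1 * (1 - β) * f i)) :
    (1 - β) * f 0 + β * f' 0 ≤
      (p1 * p2 * β + p3 * (1 - β)) * (v : ℝ) / ((1 - p1) * (1 - β)) + p2 * β / (1 - β) := by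
  obtain ⟨hf0, hf'0⟩ := bellman_le hp10 hp11 hp20 hp30 hβ0 hβ1 hf hf' hfv hf'v hfrec hf'rec
    v 0 (zero_add v)
  calc (1 - β) * f 0 + β * f' 0
      ≤ (1 - β) * (errorPerStep p1 p2 p3 β * v)
        + β * (errorPerStep p1 p2 p3 β * v + byzantineExcess p2 β) := by
        gcongr
    _ = _ := by
        rw [errorPerStep, byzantineExcess]
        ring

/-- Bound on the total error probability `(1-β) f(0) + β f'(0)`. -/
theorem error_bellman_total_bound (v : ℕ) (hv : 1 ≤ v) (p1 p2 p3 β : ℝ)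
    (hp10 : 0 ≤ p1) (hp11 : p1 < 1) (hp20 : 0 ≤ p2) (hp21 : p2 ≤ 1)
    (hp30 : 0 ≤ p3) (hp13 : p1 + p3 ≤ 1) (hβ0 : 0 ≤ β) (hβ1 : β < 1)
    (f f' : ℕ → ℝ) (hf : ∀ i, 0 ≤ f i) (hf' : ∀ i, 0 ≤ f' i)
    (hfv : f v = 0) (hf'v : f' v = 0)
    (hfrec : ∀ i < v,
      f i = p3 + (1 - p1 - p3) * f (i + 1) + p1 * β * f' i + p1 * (1 - β) * f i)
    (hf'rec : ∀ i < v,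
      f' i = max (p2 + β * f' i + (1 - β) * f i)
        (p3 + (1 - p1 - p3) * f' (i + 1) + p1 * β * f' i + p1 * (1 - β) * f i)) :
    (1 - β) * f 0 + β * f' 0 ≤
      (p1 * p2 * β + p3 * (1 - β)) * (v : ℝ) / ((1 - p1) * (1 - β)) + p2 * β / (1 - β) :=
  error_bellman_total_bound_general v p1 p2 p3 β hp10 hp11 hp20 hp30 hβ0 hβ1 f f' hf hf' hfv hf'v
    hfrec hf'rec
end

section
/- Fix an integer v ≥ 1 and real numbers p1, p2, p3, β with 0 ≤ p1 < 1, 0 ≤ p2 ≤ 1, 0 ≤ p3, p1 + p3 ≤ 1, and 0 ≤ β < 1. Let f, f' be as in the error-probability Bellman recursion, and let e, e' : ℕ → ℝ be nonnegative functions with e(v) = e'(v) = 0 satisfying, for every i < v, e(i) = p3 + (1−p1−p3) e(i+1) + p1 β e'(i) + p1 (1−β) e(i) and e'(i) = max{ p2 + (1−p2) β e'(i) + (1−p2)(1−β) e(i) , p3 + (1−p1−p3) e'(i+1) + p1 β e'(i) + p1 (1−β) e(i) }. Then e(i) ≤ f(i) and e'(i) ≤ f'(i) for every i ≤ v. -/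
/-!
Downward induction from `v`. At a step `i < v`, write `x = e i - f i` and `y = e' i - f' i`.
Subtracting the two recursions for `e i` and `f i` gives `(1 - p1 (1 - β)) x ≤ p1 β y`, using the
claim at `i + 1`. Comparing `e' i` with the branch of `f' i` matching the branch attaining the
maximum in `e' i` gives `(1 - β) y ≤ (1 - β) x`, resp. `(1 - p1 β) y ≤ p1 (1 - β) x`. In both cases
the two coefficient products differ by a positive multiple of `1 - p1`, which forces `x, y ≤ 0`.
-/

theorem nonpos_of_mul_le_of_mul_le {a b c d x y : ℝ} (ha : 0 < a) (hb : 0 ≤ b) (hd : 0 ≤ d)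
    (hbd : b * d < a * c) (hx : a * x ≤ b * y) (hy : c * y ≤ d * x) : x ≤ 0 ∧ y ≤ 0 := by
  have hy0 : y ≤ 0 := by
    have : (a * c - b * d) * y ≤ 0 := by
      nlinarith [mul_le_mul_of_nonneg_left hy ha.le, mul_le_mul_of_nonneg_left hx hd]
    exact nonpos_of_mul_nonpos_right this (sub_pos.2 hbd)
  exact ⟨nonpos_of_mul_nonpos_right (hx.trans (mul_nonpos_of_nonneg_of_nonpos hb hy0)) ha, hy0⟩

theorem exact_le_relaxed_of_succ {p1 p2 p3 β E E' F F' En En' Fn Fn' : ℝ}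
    (hp10 : 0 ≤ p1) (hp11 : p1 < 1) (hp20 : 0 ≤ p2) (hp13 : p1 + p3 ≤ 1)
    (hβ0 : 0 ≤ β) (hβ1 : β < 1) (hE0 : 0 ≤ E) (hE'0 : 0 ≤ E') (hn : En ≤ Fn) (hn' : En' ≤ Fn')
    (hE : E = p3 + (1 - p1 - p3) * En + p1 * β * E' + p1 * (1 - β) * E)
    (hF : F = p3 + (1 - p1 - p3) * Fn + p1 * β * F' + p1 * (1 - β) * F)
    (hE' : E' = max (p2 + (1 - p2) * β * E' + (1 - p2) * (1 - β) * E)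
      (p3 + (1 - p1 - p3) * En' + p1 * β * E' + p1 * (1 - β) * E))
    (hF' : F' = max (p2 + β * F' + (1 - β) * F)
      (p3 + (1 - p1 - p3) * Fn' + p1 * β * F' + p1 * (1 - β) * F)) :
    E ≤ F ∧ E' ≤ F' := by
  have h13 : 0 ≤ 1 - p1 - p3 := by linarith
  have hβ : 0 < 1 - β := by linarith
  have ha : 0 < 1 - p1 * (1 - β) := by nlinarith
  have hx : (1 - p1 * (1 - β)) * (E - F) ≤ p1 * β * (E' - F') := by
    nlinarith [mul_le_mul_of_nonneg_left hn h13]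
  suffices ∃ c d, 0 ≤ d ∧ p1 * β * d < (1 - p1 * (1 - β)) * c ∧ c * (E' - F') ≤ d * (E - F) by
    obtain ⟨c, d, hd, hbd, hy⟩ := this
    simpa only [sub_nonpos] using
      nonpos_of_mul_le_of_mul_le ha (mul_nonneg hp10 hβ0) hd hbd hx hy
  rcases max_choice (p2 + (1 - p2) * β * E' + (1 - p2) * (1 - β) * E)
      (p3 + (1 - p1 - p3) * En' + p1 * β * E' + p1 * (1 - β) * E) with hfirst | hsecond
  · have hF'first := hF'.ge.trans' (le_max_left _ _)
    refine ⟨1 - β, 1 - β, hβ.le, by nlinarith, ?_⟩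
    nlinarith [mul_nonneg (mul_nonneg hp20 hβ0) hE'0, mul_nonneg (mul_nonneg hp20 hβ.le) hE0]
  · have hF'second := hF'.ge.trans' (le_max_right _ _)
    refine ⟨1 - p1 * β, p1 * (1 - β), mul_nonneg hp10 hβ.le, by nlinarith, ?_⟩
    nlinarith [mul_le_mul_of_nonneg_left hn' h13]

theorem exact_le_relaxed_general (v : ℕ) (p1 p2 p3 β : ℝ)
    (hp10 : 0 ≤ p1) (hp11 : p1 < 1) (hp20 : 0 ≤ p2)
    (hp13 : p1 + p3 ≤ 1) (hβ0 : 0 ≤ β) (hβ1 : β < 1)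
    (f f' : ℕ → ℝ)
    (hfv : f v = 0) (hf'v : f' v = 0)
    (hfrec : ∀ i < v,
      f i = p3 + (1 - p1 - p3) * f (i + 1) + p1 * β * f' i + p1 * (1 - β) * f i)
    (hf'rec : ∀ i < v,
      f' i = max (p2 + β * f' i + (1 - β) * f i)
        (p3 + (1 - p1 - p3) * f' (i + 1) + p1 * β * f' i + p1 * (1 - β) * f i))
    (e e' : ℕ → ℝ) (he : ∀ i, 0 ≤ e i) (he' : ∀ i, 0 ≤ e' i)
    (hev : e v = 0) (he'v : e' v = 0)
    (herec : ∀ i < v,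
      e i = p3 + (1 - p1 - p3) * e (i + 1) + p1 * β * e' i + p1 * (1 - β) * e i)
    (he'rec : ∀ i < v,
      e' i = max (p2 + (1 - p2) * β * e' i + (1 - p2) * (1 - β) * e i)
        (p3 + (1 - p1 - p3) * e' (i + 1) + p1 * β * e' i + p1 * (1 - β) * e i)) :
    ∀ i ≤ v, e i ≤ f i ∧ e' i ≤ f' i := by
  intro i hi
  induction hi using Nat.decreasingInduction with
  | self => simp [hev, he'v, hfv, hf'v]
  | of_succ i hiv ih =>
    exact exact_le_relaxed_of_succ hp10 hp11 hp20 hp13 hβ0 hβ1 (he i) (he' i) ih.1 ih.2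
      (herec i hiv) (hfrec i hiv) (he'rec i hiv) (hf'rec i hiv)

/-- The exact maximal error probabilities `e, e'` are dominated by the relaxed
quantities `f, f'` of the error-probability Bellman recursion. -/
theorem exact_le_relaxed (v : ℕ) (hv : 1 ≤ v) (p1 p2 p3 β : ℝ)
    (hp10 : 0 ≤ p1) (hp11 : p1 < 1) (hp20 : 0 ≤ p2) (hp21 : p2 ≤ 1)
    (hp30 : 0 ≤ p3) (hp13 : p1 + p3 ≤ 1) (hβ0 : 0 ≤ β) (hβ1 : β < 1)
    (f f' : ℕ → ℝ) (hf : ∀ i, 0 ≤ f i) (hf' : ∀ i, 0 ≤ f' i)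
    (hfv : f v = 0) (hf'v : f' v = 0)
    (hfrec : ∀ i < v,
      f i = p3 + (1 - p1 - p3) * f (i + 1) + p1 * β * f' i + p1 * (1 - β) * f i)
    (hf'rec : ∀ i < v,
      f' i = max (p2 + β * f' i + (1 - β) * f i)
        (p3 + (1 - p1 - p3) * f' (i + 1) + p1 * β * f' i + p1 * (1 - β) * f i))
    (e e' : ℕ → ℝ) (he : ∀ i, 0 ≤ e i) (he' : ∀ i, 0 ≤ e' i)
    (hev : e v = 0) (he'v : e' v = 0)
    (herec : ∀ i < v,
      e i = p3 + (1 - p1 - p3) * e (i + 1) + p1 * β * e' i + p1 * (1 - β) * e i)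
    (he'rec : ∀ i < v,
      e' i = max (p2 + (1 - p2) * β * e' i + (1 - p2) * (1 - β) * e i)
        (p3 + (1 - p1 - p3) * e' (i + 1) + p1 * β * e' i + p1 * (1 - β) * e i)) :
    ∀ i ≤ v, e i ≤ f i ∧ e' i ≤ f' i :=
  exact_le_relaxed_general v p1 p2 p3 β hp10 hp11 hp20 hp13 hβ0 hβ1 f f' hfv hf'v hfrec hf'rec e e'
    he he' hev he'v herec he'rec
end

section
/- Fix real numbers ε, β with 0 < ε < 1/2 and 0 ≤ β < 1, an integer v with 1 ≤ v ≤ 2/ε, and real numbers p1, p2, p3 with 0 ≤ p1 ≤ 2ε, 0 ≤ p2 ≤ 2ε, 0 ≤ p3 ≤ 2ε² and p1 + p3 ≤ 1. Let e, e' : ℕ → ℝ be nonnegative functions with e(v) = e'(v) = 0 satisfying, for every i < v, e(i) = p3 + (1−p1−p3) e(i+1) + p1 β e'(i) + p1 (1−β) e(i) and e'(i) = max{ p2 + (1−p2) β e'(i) + (1−p2)(1−β) e(i) , p3 + (1−p1−p3) e'(i+1) + p1 β e'(i) + p1 (1−β) e(i) }. Then (1−β) e(0) + β e'(0) ≤ (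 (8β + 4(1−β)) / ((1−2ε)(1−β)) + 2β/(1−β) ) · ε. -/
/-!
Backward induction on the number of accepted chunks. The gap `e' i - e i` never exceeds
`c = p2 / (1 - β)`: if the Byzantine sensor transmits a false chunk, the fixed-point equation reads
`(1 - β + p2 β) (e' - e) = p2 (1 - e) ≤ p2`; otherwise the gap at `i` is `1 - p1 - p3` times the
gap at `i + 1`. Substituting this into the recurrence for `e` gives
`(1 - p1) e i ≤ (1 - p1) e (i + 1) + p3 + p1 β c`, so `e 0 ≤ v (p3 + p1 β c) / (1 - p1)`.
Hence `P_e = e 0 + β (e' 0 - e 0) ≤ v (p3 + p1 β c) / (1 - p1) + β c`, and the bounds on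
`p1, p2, p3` and `v ≤ 2 / ε` turn this into the stated estimate.
-/

theorem sub_le_div_one_sub_of_eq {p2 β x y : ℝ} (hp2 : 0 ≤ p2) (hβ0 : 0 ≤ β) (hβ1 : β < 1)
    (hx : 0 ≤ x) (hy : y = p2 + (1 - p2) * β * y + (1 - p2) * (1 - β) * x) :
    y - x ≤ p2 / (1 - β) := by
  have hβ : 0 < 1 - β := by linarith
  rw [le_div_iff₀ hβ]
  have hfixed : (1 - β + p2 * β) * (y - x) = p2 * (1 - x) := by linear_combination hy
  rcases le_or_gt (y - x) 0 with hle | hpos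
  · nlinarith
  · nlinarith [mul_nonneg (mul_nonneg hp2 hβ0) hpos.le]

section Recurrences

variable {p1 p2 p3 β : ℝ} {v : ℕ} {e e' : ℕ → ℝ}

theorem sub_le_div_one_sub_of_recurrence (hβ0 : 0 ≤ β) (hβ1 : β < 1) (hp10 : 0 ≤ p1)
    (hp20 : 0 ≤ p2) (hp30 : 0 ≤ p3) (hp13 : p1 + p3 ≤ 1) (he : ∀ i, 0 ≤ e i)
    (hev : e v = 0) (he'v : e' v = 0)
    (herec : ∀ i < v,
      e i = p3 + (1 - p1 - p3) * e (i + 1) + p1 * β * e' i + p1 * (1 - β) * e i)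
    (he'rec : ∀ i < v,
      e' i = max (p2 + (1 - p2) * β * e' i + (1 - p2) * (1 - β) * e i)
        (p3 + (1 - p1 - p3) * e' (i + 1) + p1 * β * e' i + p1 * (1 - β) * e i))
    {i : ℕ} (hi : i ≤ v) : e' i - e i ≤ p2 / (1 - β) := by
  have hc : 0 ≤ p2 / (1 - β) := div_nonneg hp20 (by linarith)
  induction hi using Nat.decreasingInduction with
  | self => simpa [hev, he'v] using hc
  | of_succ i hi ih =>
    rcases max_choice (p2 + (1 - p2) * β * e' i + (1 - p2) * (1 - β) * e i)
        (p3 + (1 - p1 - p3) * e' (i + 1) + p1 * β * e' i + p1 * (1 - β) * e i) with h | h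
    · exact sub_le_div_one_sub_of_eq hp20 hβ0 hβ1 (he i) ((he'rec i hi).trans h)
    · have hgap : e' i - e i = (1 - p1 - p3) * (e' (i + 1) - e (i + 1)) := by
        linear_combination (he'rec i hi).trans h - herec i hi
      have hdamp : 0 ≤ 1 - p1 - p3 := by linarith
      calc e' i - e i = (1 - p1 - p3) * (e' (i + 1) - e (i + 1)) := hgap
        _ ≤ (1 - p1 - p3) * (p2 / (1 - β)) := mul_le_mul_of_nonneg_left ih hdamp
        _ ≤ p2 / (1 - β) := mul_le_of_le_one_left hc (by linarith)

theorem le_sub_mul_div_of_sub_le (hβ0 : 0 ≤ β) (hp10 : 0 ≤ p1) (hp1 : p1 < 1) (hp30 : 0 ≤ p3)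
    (he : ∀ i, 0 ≤ e i) (hev : e v = 0)
    (herec : ∀ i < v,
      e i = p3 + (1 - p1 - p3) * e (i + 1) + p1 * β * e' i + p1 * (1 - β) * e i)
    {c : ℝ} (hgap : ∀ i ≤ v, e' i - e i ≤ c) {i : ℕ} (hi : i ≤ v) :
    e i ≤ (v - i) * ((p3 + p1 * β * c) / (1 - p1)) := by
  have hp1' : 0 < 1 - p1 := by linarith
  induction hi using Nat.decreasingInduction with
  | self => simp [hev]
  | of_succ i hi ih =>
    have hstep : (1 - p1) * e i
        = p3 + (1 - p1) * e (i + 1) - p3 * e (i + 1) + p1 * β * (e' i - e i) := by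
      linear_combination herec i hi
    have hgap_i := mul_le_mul_of_nonneg_left (hgap i hi.le) (mul_nonneg hp10 hβ0)
    have hnext := mul_le_mul_of_nonneg_left ih hp1'.le
    have hd : (1 - p1) * ((p3 + p1 * β * c) / (1 - p1)) = p3 + p1 * β * c :=
      mul_div_cancel₀ _ hp1'.ne'
    push_cast at hnext
    refine le_of_mul_le_mul_left ?_ hp1'
    linarith [mul_nonneg hp30 (he (i + 1))]

end Recurrences

section Estimates

variable {ε β : ℝ}

theorem mul_div_one_sub_le {p2 : ℝ} (hβ0 : 0 ≤ β) (hβ1 : β < 1) (hp2 : p2 ≤ 2 * ε) :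
    β * (p2 / (1 - β)) ≤ 2 * β / (1 - β) * ε := by
  have hβ : 0 < 1 - β := by linarith
  rw [mul_div_assoc', div_mul_eq_mul_div]
  exact div_le_div_of_nonneg_right (by nlinarith) hβ.le

theorem natCast_mul_div_one_sub_le {v : ℕ} {p1 p2 p3 : ℝ} (hε0 : 0 < ε) (hε1 : ε < 1 / 2)
    (hβ0 : 0 ≤ β) (hβ1 : β < 1) (hv : (v : ℝ) ≤ 2 / ε) (hp10 : 0 ≤ p1) (hp11 : p1 ≤ 2 * ε)
    (hp20 : 0 ≤ p2) (hp21 : p2 ≤ 2 * ε) (hp30 : 0 ≤ p3) (hp31 : p3 ≤ 2 * ε ^ 2) :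
    v * ((p3 + p1 * β * (p2 / (1 - β))) / (1 - p1)) ≤
      (8 * β + 4 * (1 - β)) / ((1 - 2 * ε) * (1 - β)) * ε := by
  have hβ : 0 < 1 - β := by linarith
  have hε : 0 < 1 - 2 * ε := by linarith
  have hc : p2 / (1 - β) ≤ 2 * ε / (1 - β) := by gcongr
  have hd : (p3 + p1 * β * (p2 / (1 - β))) / (1 - p1) ≤
      (2 * ε ^ 2 + 2 * ε * β * (2 * ε / (1 - β))) / (1 - 2 * ε) := by
    gcongr
  calc (v : ℝ) * ((p3 + p1 * β * (p2 / (1 - β))) / (1 - p1))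
      ≤ 2 / ε * ((2 * ε ^ 2 + 2 * ε * β * (2 * ε / (1 - β))) / (1 - 2 * ε)) := by
        gcongr
        have : 0 < 1 - p1 := by linarith
        positivity
    _ = (8 * β + 4 * (1 - β)) / ((1 - 2 * ε) * (1 - β)) * ε := by
        field_simp
        ring

end Estimates

theorem total_error_probability_bound_general (ε β : ℝ) (hε0 : 0 < ε) (hε1 : ε < 1 / 2)
    (hβ0 : 0 ≤ β) (hβ1 : β < 1) (v : ℕ) (hv2 : (v : ℝ) ≤ 2 / ε)
    (p1 p2 p3 : ℝ) (hp10 : 0 ≤ p1) (hp11 : p1 ≤ 2 * ε)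
    (hp20 : 0 ≤ p2) (hp21 : p2 ≤ 2 * ε) (hp30 : 0 ≤ p3) (hp31 : p3 ≤ 2 * ε ^ 2)
    (hp13 : p1 + p3 ≤ 1)
    (e e' : ℕ → ℝ) (he : ∀ i, 0 ≤ e i)
    (hev : e v = 0) (he'v : e' v = 0)
    (herec : ∀ i < v,
      e i = p3 + (1 - p1 - p3) * e (i + 1) + p1 * β * e' i + p1 * (1 - β) * e i)
    (he'rec : ∀ i < v,
      e' i = max (p2 + (1 - p2) * β * e' i + (1 - p2) * (1 - β) * e i)
        (p3 + (1 - p1 - p3) * e' (i + 1) + p1 * β * e' i + p1 * (1 - β) * e i)) :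
    (1 - β) * e 0 + β * e' 0 ≤
      ((8 * β + 4 * (1 - β)) / ((1 - 2 * ε) * (1 - β)) + 2 * β / (1 - β)) * ε := by
  have hgap : ∀ i ≤ v, e' i - e i ≤ p2 / (1 - β) := fun i hi =>
    sub_le_div_one_sub_of_recurrence hβ0 hβ1 hp10 hp20 hp30 hp13 he hev he'v herec he'rec hi
  have he0 :=
    le_sub_mul_div_of_sub_le hβ0 hp10 (by linarith) hp30 he hev herec hgap (Nat.zero_le v)
  calc (1 - β) * e 0 + β * e' 0 = e 0 + β * (e' 0 - e 0) := by ring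
    _ ≤ v * ((p3 + p1 * β * (p2 / (1 - β))) / (1 - p1)) + β * (p2 / (1 - β)) :=
        add_le_add (by simpa using he0) (mul_le_mul_of_nonneg_left (hgap 0 (Nat.zero_le v)) hβ0)
    _ ≤ (8 * β + 4 * (1 - β)) / ((1 - 2 * ε) * (1 - β)) * ε + 2 * β / (1 - β) * ε :=
        add_le_add (natCast_mul_div_one_sub_le hε0 hε1 hβ0 hβ1 hv2 hp10 hp11 hp20 hp21 hp30 hp31)
          (mul_div_one_sub_le hβ0 hβ1 hp21)
    _ = _ := by ring

/-- Bound on the total error probability `P_e = (1-β) e(0) + β e'(0)` of the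
"transmit-then-verify" protocol, showing `P_e → 0` as `ε → 0`. -/
theorem total_error_probability_bound (ε β : ℝ) (hε0 : 0 < ε) (hε1 : ε < 1 / 2)
    (hβ0 : 0 ≤ β) (hβ1 : β < 1) (v : ℕ) (hv1 : 1 ≤ v) (hv2 : (v : ℝ) ≤ 2 / ε)
    (p1 p2 p3 : ℝ) (hp10 : 0 ≤ p1) (hp11 : p1 ≤ 2 * ε)
    (hp20 : 0 ≤ p2) (hp21 : p2 ≤ 2 * ε) (hp30 : 0 ≤ p3) (hp31 : p3 ≤ 2 * ε ^ 2)
    (hp13 : p1 + p3 ≤ 1)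
    (e e' : ℕ → ℝ) (he : ∀ i, 0 ≤ e i) (he' : ∀ i, 0 ≤ e' i)
    (hev : e v = 0) (he'v : e' v = 0)
    (herec : ∀ i < v,
      e i = p3 + (1 - p1 - p3) * e (i + 1) + p1 * β * e' i + p1 * (1 - β) * e i)
    (he'rec : ∀ i < v,
      e' i = max (p2 + (1 - p2) * β * e' i + (1 - p2) * (1 - β) * e i)
        (p3 + (1 - p1 - p3) * e' (i + 1) + p1 * β * e' i + p1 * (1 - β) * e i)) :
    (1 - β) * e 0 + β * e' 0 ≤
      ((8 * β + 4 * (1 - β)) / ((1 - 2 * ε) * (1 - β)) + 2 * β / (1 - β)) * ε :=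
  total_error_probability_bound_general ε β hε0 hε1 hβ0 hβ1 v hv2 p1 p2 p3 hp10 hp11 hp20 hp21 hp30
    hp31 hp13 e e' he hev he'v herec he'rec
end

section
/- Fix an integer v ≥ 1 and real numbers p1, p2, β with 0 ≤ p1 < 1, 0 ≤ p2 < 1, and 0 ≤ β < 1, and let q, q' be as in the expected-length Bellman recursion. Then for every i < v, q(i) ≥ q(i+1) + 1 and q'(i) ≥ q'(i+1) + 1. -/
/-!
Put `X i = q i - q (i + 1) - 1` and `Y i = q' i - q' (i + 1) - 1`. Subtract the equation for `q`
at `i + 1` from the one at `i`, and the action attaining `q' (i + 1)` from the same action's value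
at `i`, which `q' i` dominates. Once `X (i + 1), Y (i + 1) ≥ 0` (or `i + 1 = v`) this gives
`X ≥ r β Y + r (1 - β) X` and `Y ≥ s β Y + s (1 - β) X`, where `r = p1` and `s ∈ {p1, 1 - p2}` are
re-selection probabilities. The determinant `1 - r (1 - β) - s β` of this system is positive since
`r, β < 1`, so `X i, Y i ≥ 0`, and backward induction from `v` finishes.
-/

/-- The value of one chunk transmission: with probability `1 - r` the chunk is accepted and the
process moves on with value `next`; otherwise a new sensor is selected, Byzantine (value `byz`)
with probability `β` and honest (value `hon`) otherwise. -/
def transmissionValue (r β next byz hon : ℝ) : ℝ :=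
  1 + (1 - r) * next + r * β * byz + r * (1 - β) * hon

lemma transmissionValue_sub_sub_one_ge {r β u w z u' w' z' : ℝ} (hr1 : r ≤ 1)
    (hu : u' + 1 ≤ u) :
    r * β * (w - w' - 1) + r * (1 - β) * (z - z' - 1) ≤
      transmissionValue r β u w z - transmissionValue r β u' w' z' - 1 := by
  unfold transmissionValue
  nlinarith [mul_nonneg (sub_nonneg.2 hr1) (sub_nonneg.2 hu)]

lemma transmissionValue_sub_one_ge {r β u w z : ℝ} (hr0 : 0 ≤ r) (hr1 : r ≤ 1) (hu : 0 ≤ u) :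
    r * β * (w - 1) + r * (1 - β) * (z - 1) ≤ transmissionValue r β u w z - 1 := by
  unfold transmissionValue
  nlinarith [mul_nonneg (sub_nonneg.2 hr1) hu]

lemma nonneg_of_le_linear {a b c d X Y : ℝ} (ha : 0 ≤ a) (hb : b ≤ 1) (hc : c ≤ 1) (hd : 0 ≤ d)
    (hdet : a * d < (1 - b) * (1 - c)) (hX : a * Y + b * X ≤ X) (hY : c * Y + d * X ≤ Y) :
    0 ≤ X ∧ 0 ≤ Y := by
  have hpos : 0 < (1 - b) * (1 - c) - a * d := by linarith
  -- Cramer's rule: both unknowns are nonnegative combinations of the two slacks.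
  have hX' : 0 ≤ ((1 - b) * (1 - c) - a * d) * X := by
    nlinarith [mul_nonneg (sub_nonneg.2 hc) (sub_nonneg.2 hX), mul_nonneg ha (sub_nonneg.2 hY)]
  have hY' : 0 ≤ ((1 - b) * (1 - c) - a * d) * Y := by
    nlinarith [mul_nonneg (sub_nonneg.2 hb) (sub_nonneg.2 hY), mul_nonneg hd (sub_nonneg.2 hX)]
  exact ⟨nonneg_of_mul_nonneg_right (by linarith) hpos,
    nonneg_of_mul_nonneg_right (by linarith) hpos⟩

lemma nonneg_of_transmission_ineq {r s β X Y : ℝ} (hr0 : 0 ≤ r) (hr1 : r < 1) (hs0 : 0 ≤ s)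
    (hs1 : s ≤ 1) (hβ0 : 0 ≤ β) (hβ1 : β < 1)
    (hX : r * β * Y + r * (1 - β) * X ≤ X) (hY : s * β * Y + s * (1 - β) * X ≤ Y) :
    0 ≤ X ∧ 0 ≤ Y := by
  refine nonneg_of_le_linear (by positivity) ?_ ?_ (mul_nonneg hs0 (by linarith)) ?_ hX hY
  · nlinarith
  · nlinarith
  · nlinarith [mul_lt_mul_of_pos_right hr1 (sub_pos.2 hβ1), mul_le_mul_of_nonneg_right hs1 hβ0]

section Bellman

variable {p1 p2 β : ℝ} {q q' : ℕ → ℝ} {i : ℕ}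

lemma bellman_gap_of_terminal (hp10 : 0 ≤ p1) (hp11 : p1 < 1) (hβ0 : 0 ≤ β) (hβ1 : β < 1)
    (hq : q i = transmissionValue p1 β (q (i + 1)) (q' i) (q i))
    (hq' : transmissionValue p1 β (q' (i + 1)) (q' i) (q i) ≤ q' i)
    (hv : q (i + 1) = 0) (hv' : q' (i + 1) = 0) :
    q (i + 1) + 1 ≤ q i ∧ q' (i + 1) + 1 ≤ q' i := by
  rw [hv] at hq ⊢
  rw [hv'] at hq' ⊢
  have h := transmissionValue_sub_one_ge (β := β) (w := q' i) (z := q i) hp10 hp11.le le_rfl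
  have := nonneg_of_transmission_ineq (X := q i - 1) (Y := q' i - 1) hp10 hp11 hp10 hp11.le hβ0
    hβ1 (by linarith) (by linarith)
  constructor <;> linarith

lemma bellman_gap_of_gap_succ (hp10 : 0 ≤ p1) (hp11 : p1 < 1) (hp20 : 0 ≤ p2) (hp21 : p2 < 1)
    (hβ0 : 0 ≤ β) (hβ1 : β < 1)
    (hq : ∀ j ∈ [i, i + 1], q j = transmissionValue p1 β (q (j + 1)) (q' j) (q j))
    (hq' : ∀ j ∈ [i, i + 1], q' j = max (transmissionValue (1 - p2) β (q' (j + 1)) (q' j) (q j))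
      (transmissionValue p1 β (q' (j + 1)) (q' j) (q j)))
    (hgap : q (i + 2) + 1 ≤ q (i + 1) ∧ q' (i + 2) + 1 ≤ q' (i + 1)) :
    q (i + 1) + 1 ≤ q i ∧ q' (i + 1) + 1 ≤ q' i := by
  have hX := transmissionValue_sub_sub_one_ge (β := β) (w := q' i) (z := q i)
    (w' := q' (i + 1)) (z' := q (i + 1)) hp11.le hgap.1
  rw [← hq i (by simp), ← hq (i + 1) (by simp)] at hX
  obtain ⟨s, hs0, hs1, hY⟩ : ∃ s, 0 ≤ s ∧ s ≤ 1 ∧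
      s * β * (q' i - q' (i + 1) - 1) + s * (1 - β) * (q i - q (i + 1) - 1) ≤
        q' i - q' (i + 1) - 1 := by
    have hi := (hq' i (by simp)).symm
    rcases max_choice (transmissionValue (1 - p2) β (q' (i + 2)) (q' (i + 1)) (q (i + 1)))
      (transmissionValue p1 β (q' (i + 2)) (q' (i + 1)) (q (i + 1))) with h | h <;>
      rw [← hq' (i + 1) (by simp)] at h
    · refine ⟨1 - p2, sub_nonneg.2 hp21.le, sub_le_self 1 hp20, ?_⟩
      have := transmissionValue_sub_sub_one_ge (β := β) (w := q' i) (z := q i)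
        (w' := q' (i + 1)) (z' := q (i + 1)) (sub_le_self 1 hp20) hgap.2
      linarith [(le_max_left _ _).trans_eq hi]
    · refine ⟨p1, hp10, hp11.le, ?_⟩
      have := transmissionValue_sub_sub_one_ge (β := β) (w := q' i) (z := q i)
        (w' := q' (i + 1)) (z' := q (i + 1)) hp11.le hgap.2
      linarith [(le_max_right _ _).trans_eq hi]
  have := nonneg_of_transmission_ineq hp10 hp11 hs0 hs1 hβ0 hβ1 (by linarith) hY
  constructor <;> linarith

end Bellman

theorem length_bellman_monotone_general (v : ℕ) (p1 p2 β : ℝ)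
    (hp10 : 0 ≤ p1) (hp11 : p1 < 1) (hp20 : 0 ≤ p2) (hp21 : p2 < 1)
    (hβ0 : 0 ≤ β) (hβ1 : β < 1)
    (q q' : ℕ → ℝ)
    (hqv : q v = 0) (hq'v : q' v = 0)
    (hqrec : ∀ i < v,
      q i = 1 + (1 - p1) * q (i + 1) + p1 * β * q' i + p1 * (1 - β) * q i)
    (hq'rec : ∀ i < v,
      q' i = max (1 + p2 * q' (i + 1) + (1 - p2) * β * q' i + (1 - p2) * (1 - β) * q i)
        (1 + (1 - p1) * q' (i + 1) + p1 * β * q' i + p1 * (1 - β) * q i)) :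
    ∀ i < v, q i ≥ q (i + 1) + 1 ∧ q' i ≥ q' (i + 1) + 1 := by
  have hq : ∀ i < v, q i = transmissionValue p1 β (q (i + 1)) (q' i) (q i) := fun i hi =>
    (hqrec i hi).trans (by unfold transmissionValue; ring)
  have hq' : ∀ i < v, q' i = max (transmissionValue (1 - p2) β (q' (i + 1)) (q' i) (q i))
      (transmissionValue p1 β (q' (i + 1)) (q' i) (q i)) := fun i hi =>
    (hq'rec i hi).trans (by unfold transmissionValue; congr 1; ring)
  intro i hi
  refine Nat.decreasingInduction
    (motive := fun k _ => k < v → q k ≥ q (k + 1) + 1 ∧ q' k ≥ q' (k + 1) + 1)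
    (fun k hk ih _ => ?_) (fun hv => absurd hv (lt_irrefl v)) hi.le hi
  rcases (Nat.succ_le_of_lt hk).eq_or_lt with hv | hv
  · subst hv
    exact bellman_gap_of_terminal hp10 hp11 hβ0 hβ1 (hq k hk)
      ((le_max_right _ _).trans_eq (hq' k hk).symm) hqv hq'v
  · exact bellman_gap_of_gap_succ hp10 hp11 hp20 hp21 hβ0 hβ1
      (fun j hj => hq j (by simp at hj; omega)) (fun j hj => hq' j (by simp at hj; omega)) (ih hv)

/-- In the expected-length Bellman recursion, each step costs at least one transmission. -/
theorem length_bellman_monotone (v : ℕ) (hv : 1 ≤ v) (p1 p2 β : ℝ)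
    (hp10 : 0 ≤ p1) (hp11 : p1 < 1) (hp20 : 0 ≤ p2) (hp21 : p2 < 1)
    (hβ0 : 0 ≤ β) (hβ1 : β < 1)
    (q q' : ℕ → ℝ) (hq : ∀ i, 0 ≤ q i) (hq' : ∀ i, 0 ≤ q' i)
    (hqv : q v = 0) (hq'v : q' v = 0)
    (hqrec : ∀ i < v,
      q i = 1 + (1 - p1) * q (i + 1) + p1 * β * q' i + p1 * (1 - β) * q i)
    (hq'rec : ∀ i < v,
      q' i = max (1 + p2 * q' (i + 1) + (1 - p2) * β * q' i + (1 - p2) * (1 - β) * q i)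
        (1 + (1 - p1) * q' (i + 1) + p1 * β * q' i + p1 * (1 - β) * q i)) :
    ∀ i < v, q i ≥ q (i + 1) + 1 ∧ q' i ≥ q' (i + 1) + 1 :=
  length_bellman_monotone_general v p1 p2 β hp10 hp11 hp20 hp21 hβ0 hβ1 q q' hqv hq'v hqrec hq'rec
end

section
/- Fix an integer v ≥ 1 and real numbers p1, p2, β with 0 ≤ p1 < 1, 0 ≤ p2 < 1, and 0 ≤ β < 1, and let q, q' be as in the expected-length Bellman recursion. Then for every i ≤ v, q'(i) ≤ 1/(1−β) + q(i). -/
/-!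
Write `D i = q' i - q i` for the gap. Eliminating `q' i` from the honest equation and subtracting
it from either branch of the Byzantine maximum gives an exact affine recursion for the gap:
`D i = (1 - p1) D (i+1)` on the second branch (the Byzantine sensor mimics an honest one), and
`((1 - p1)(1 - β) + p2 β) D i = (1 - p1)(1 + p2 D (i+1)) - p2` on the first (it attacks).
Both maps send `(-∞, 1/(1-β)]` into itself, so the bound propagates backwards from `D v = 0`.
-/

section BellmanGap

variable {p1 p2 β x x' y y' : ℝ}

theorem bellman_gap_eq_of_attack
    (hx : x = 1 + (1 - p1) * x' + p1 * β * y + p1 * (1 - β) * x)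
    (hy : y = 1 + p2 * y' + (1 - p2) * β * y + (1 - p2) * (1 - β) * x) :
    ((1 - p1) * (1 - β) + p2 * β) * (y - x) = (1 - p1) * (1 + p2 * (y' - x')) - p2 := by
  linear_combination (1 - p1) * hy - p2 * hx

theorem bellman_gap_eq_of_mimic
    (hx : x = 1 + (1 - p1) * x' + p1 * β * y + p1 * (1 - β) * x)
    (hy : y = 1 + (1 - p1) * y' + p1 * β * y + p1 * (1 - β) * x) :
    y - x = (1 - p1) * (y' - x') := by
  linear_combination hy - hx

theorem bellman_gap_le_of_attack (hp10 : 0 ≤ p1) (hp11 : p1 < 1) (hp20 : 0 ≤ p2)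
    (hβ0 : 0 ≤ β) (hβ1 : β < 1)
    (hx : x = 1 + (1 - p1) * x' + p1 * β * y + p1 * (1 - β) * x)
    (hy : y = 1 + p2 * y' + (1 - p2) * β * y + (1 - p2) * (1 - β) * x)
    (hgap : y' ≤ 1 / (1 - β) + x') :
    y ≤ 1 / (1 - β) + x := by
  set c := 1 / (1 - β)
  have hc : (1 - β) * c = 1 := mul_one_div_cancel (by linarith)
  have hc0 : 0 ≤ c := by positivity
  have hp1 : 0 ≤ 1 - p1 := by linarith
  have hK : 0 < (1 - p1) * (1 - β) + p2 * β := by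
    have := mul_pos (sub_pos.2 hp11) (sub_pos.2 hβ1)
    positivity
  have hKc : ((1 - p1) * (1 - β) + p2 * β) * (y - x) ≤ ((1 - p1) * (1 - β) + p2 * β) * c :=
    calc ((1 - p1) * (1 - β) + p2 * β) * (y - x)
        = (1 - p1) * (1 + p2 * (y' - x')) - p2 := bellman_gap_eq_of_attack hx hy
      _ ≤ (1 - p1) * (1 + p2 * c) - p2 := by gcongr; linarith
      _ = ((1 - p1) * (1 - β) + p2 * β) * c - p1 * p2 * c := by linear_combination (p2 - (1 - p1)) * hc
      _ ≤ ((1 - p1) * (1 - β) + p2 * β) * c := sub_le_self _ (by positivity)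
  linarith [le_of_mul_le_mul_left hKc hK]

theorem bellman_gap_le_of_mimic (hp10 : 0 ≤ p1) (hp11 : p1 < 1) (hβ1 : β < 1)
    (hx : x = 1 + (1 - p1) * x' + p1 * β * y + p1 * (1 - β) * x)
    (hy : y = 1 + (1 - p1) * y' + p1 * β * y + p1 * (1 - β) * x)
    (hgap : y' ≤ 1 / (1 - β) + x') :
    y ≤ 1 / (1 - β) + x := by
  have hc0 : 0 ≤ 1 / (1 - β) := one_div_nonneg.2 (by linarith)
  have hp1 : 0 ≤ 1 - p1 := by linarith
  have : y - x ≤ 1 / (1 - β) :=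
    calc y - x = (1 - p1) * (y' - x') := bellman_gap_eq_of_mimic hx hy
      _ ≤ (1 - p1) * (1 / (1 - β)) := by gcongr; linarith
      _ ≤ 1 / (1 - β) := mul_le_of_le_one_left hc0 (by linarith)
  linarith

end BellmanGap

theorem length_bellman_qprime_bound_general (v : ℕ) (p1 p2 β : ℝ)
    (hp10 : 0 ≤ p1) (hp11 : p1 < 1) (hp20 : 0 ≤ p2)
    (hβ0 : 0 ≤ β) (hβ1 : β < 1)
    (q q' : ℕ → ℝ)
    (hqv : q v = 0) (hq'v : q' v = 0)
    (hqrec : ∀ i < v,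
      q i = 1 + (1 - p1) * q (i + 1) + p1 * β * q' i + p1 * (1 - β) * q i)
    (hq'rec : ∀ i < v,
      q' i = max (1 + p2 * q' (i + 1) + (1 - p2) * β * q' i + (1 - p2) * (1 - β) * q i)
        (1 + (1 - p1) * q' (i + 1) + p1 * β * q' i + p1 * (1 - β) * q i)) :
    ∀ i ≤ v, q' i ≤ 1 / (1 - β) + q i := by
  intro i hi
  induction hi using Nat.decreasingInduction with
  | self =>
    have : (0 : ℝ) ≤ 1 / (1 - β) := one_div_nonneg.2 (by linarith)
    simpa [hqv, hq'v]
  | of_succ i hiv ih =>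
    rcases max_choice (1 + p2 * q' (i + 1) + (1 - p2) * β * q' i + (1 - p2) * (1 - β) * q i)
      (1 + (1 - p1) * q' (i + 1) + p1 * β * q' i + p1 * (1 - β) * q i) with hmax | hmax
    · exact bellman_gap_le_of_attack hp10 hp11 hp20 hβ0 hβ1 (hqrec i hiv)
        ((hq'rec i hiv).trans hmax) ih
    · exact bellman_gap_le_of_mimic hp10 hp11 hβ1 (hqrec i hiv) ((hq'rec i hiv).trans hmax) ih

/-- In the expected-length Bellman recursion, `q'(i) ≤ 1/(1-β) + q(i)`. -/
theorem length_bellman_qprime_bound (v : ℕ) (hv : 1 ≤ v) (p1 p2 β : ℝ)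
    (hp10 : 0 ≤ p1) (hp11 : p1 < 1) (hp20 : 0 ≤ p2) (hp21 : p2 < 1)
    (hβ0 : 0 ≤ β) (hβ1 : β < 1)
    (q q' : ℕ → ℝ) (hq : ∀ i, 0 ≤ q i) (hq' : ∀ i, 0 ≤ q' i)
    (hqv : q v = 0) (hq'v : q' v = 0)
    (hqrec : ∀ i < v,
      q i = 1 + (1 - p1) * q (i + 1) + p1 * β * q' i + p1 * (1 - β) * q i)
    (hq'rec : ∀ i < v,
      q' i = max (1 + p2 * q' (i + 1) + (1 - p2) * β * q' i + (1 - p2) * (1 - β) * q i)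
        (1 + (1 - p1) * q' (i + 1) + p1 * β * q' i + p1 * (1 - β) * q i)) :
    ∀ i ≤ v, q' i ≤ 1 / (1 - β) + q i :=
  length_bellman_qprime_bound_general v p1 p2 β hp10 hp11 hp20 hβ0 hβ1 q q' hqv hq'v hqrec hq'rec
end

section
/- Fix an integer v ≥ 1 and real numbers p1, p2, β with 0 ≤ p1 < 1, 0 ≤ p2 < 1, and 0 ≤ β < 1, and let q, q' be as in the expected-length Bellman recursion. Then for every i ≤ v, q(i) ≤ (1 + p1/((1−p1)(1−β))) · (v − i). -/
/-!
Write `c = 1 + p1 / ((1 - p1) (1 - β))` and `K = 1 / (1 - β)`. The functions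
`Q i = c (v - i)` and `Q' i = Q i + K` are a supersolution of the Bellman recursion: the honest
equation holds with equality and both Byzantine branches are satisfied with `≤`. Going down from
`i = v`, compare `(q i, q' i)` with `(Q i, Q' i)`: once the bound holds at `i + 1`, the excesses
`x = q i - Q i` and `y = q' i - Q' i` are bounded by `r m` and `s m` with `r < 1`, `s ≤ 1`, where
`m = (1 - β) x + β y`; as `β < 1` this forces `m ≤ 0`, hence `x, y ≤ 0`.
-/

namespace LengthBellman

/-- One chunk transmission: it is accepted with probability `1 - r`, moving on to the value
`next`; otherwise a fresh sensor is selected, honest (value `x`) with probability `1 - β` and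
Byzantine (value `y`) with probability `β`. -/
def bellmanStep (r β next x y : ℝ) : ℝ :=
  1 + (1 - r) * next + r * ((1 - β) * x + β * y)

noncomputable def slope (p1 β : ℝ) : ℝ := 1 + p1 / ((1 - p1) * (1 - β))

theorem nonpos_of_le_mul_convexComb {r s β x y : ℝ} (hr0 : 0 ≤ r) (hr1 : r < 1)
    (hs0 : 0 ≤ s) (hs1 : s ≤ 1) (hβ0 : 0 ≤ β) (hβ1 : β < 1)
    (hx : x ≤ r * ((1 - β) * x + β * y)) (hy : y ≤ s * ((1 - β) * x + β * y)) :
    x ≤ 0 ∧ y ≤ 0 := by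
  set m := (1 - β) * x + β * y
  have hm : m ≤ 0 := by
    by_contra! hm
    have hxm : x < m := hx.trans_lt (mul_lt_of_lt_one_left hm hr1)
    have hym : y ≤ m := hy.trans (mul_le_of_le_one_left hm.le hs1)
    nlinarith [mul_lt_mul_of_pos_left hxm (sub_pos.2 hβ1), mul_le_mul_of_nonneg_left hym hβ0]
  exact ⟨hx.trans (mul_nonpos_of_nonneg_of_nonpos hr0 hm),
    hy.trans (mul_nonpos_of_nonneg_of_nonpos hs0 hm)⟩

theorem bellmanStep_sub_le {r β n N x y X Y : ℝ} (hr : r ≤ 1) (hn : n ≤ N) :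
    bellmanStep r β n x y - bellmanStep r β N X Y ≤
      r * ((1 - β) * (x - X) + β * (y - Y)) := by
  unfold bellmanStep
  nlinarith [mul_nonneg (sub_nonneg.2 hr) (sub_nonneg.2 hn)]

theorem le_of_le_bellmanStep {r s β n n' N N' x y X Y : ℝ} (hr0 : 0 ≤ r) (hr1 : r < 1)
    (hs0 : 0 ≤ s) (hs1 : s ≤ 1) (hβ0 : 0 ≤ β) (hβ1 : β < 1)
    (hx : x ≤ bellmanStep r β n x y) (hy : y ≤ bellmanStep s β n' x y)
    (hX : bellmanStep r β N X Y ≤ X) (hY : bellmanStep s β N' X Y ≤ Y)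
    (hn : n ≤ N) (hn' : n' ≤ N') :
    x ≤ X ∧ y ≤ Y := by
  have hdx := bellmanStep_sub_le (β := β) (x := x) (y := y) (X := X) (Y := Y) hr1.le hn
  have hdy := bellmanStep_sub_le (β := β) (x := x) (y := y) (X := X) (Y := Y) hs1 hn'
  have := nonpos_of_le_mul_convexComb (x := x - X) (y := y - Y) hr0 hr1 hs0 hs1 hβ0 hβ1
    (by linarith) (by linarith)
  constructor <;> linarith

theorem bellmanStep_eq (r β n x y : ℝ) :
    bellmanStep r β n x y = 1 + (1 - r) * n + r * β * y + r * (1 - β) * x := by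
  unfold bellmanStep; ring

theorem bellmanStep_add_next (r β n t x y : ℝ) :
    bellmanStep r β (n + t) x y = bellmanStep r β n x y + (1 - r) * t := by
  unfold bellmanStep; ring

section Supersolution

variable {p1 β : ℝ} (Q : ℝ)

theorem bellmanStep_slope (hp1 : p1 < 1) (hβ : β < 1) :
    bellmanStep p1 β (Q - slope p1 β) Q (Q + (1 - β)⁻¹) = Q := by
  have : 1 - p1 ≠ 0 := by linarith
  have : 1 - β ≠ 0 := by linarith
  unfold bellmanStep slope
  field_simp
  ring

theorem bellmanStep_slope_honest_le (hp10 : 0 ≤ p1) (hp11 : p1 < 1) (hβ : β < 1) :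
    bellmanStep p1 β (Q - slope p1 β + (1 - β)⁻¹) Q (Q + (1 - β)⁻¹) ≤
      Q + (1 - β)⁻¹ := by
  rw [bellmanStep_add_next, bellmanStep_slope Q hp11 hβ]
  have : 0 ≤ (1 - β)⁻¹ := inv_nonneg.2 (by linarith)
  nlinarith

theorem bellmanStep_slope_byzantine_le {p2 : ℝ} (hp10 : 0 ≤ p1) (hp11 : p1 < 1)
    (hp2 : 0 ≤ p2) (hβ : β < 1) :
    bellmanStep (1 - p2) β (Q - slope p1 β + (1 - β)⁻¹) Q (Q + (1 - β)⁻¹) ≤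
      Q + (1 - β)⁻¹ := by
  have hslope : 1 ≤ slope p1 β :=
    le_add_of_nonneg_right (div_nonneg hp10 (by nlinarith))
  have : 1 - β ≠ 0 := by linarith
  have hK : (1 - β) * (1 - β)⁻¹ = 1 := mul_inv_cancel₀ this
  unfold bellmanStep
  nlinarith [mul_le_mul_of_nonneg_left hslope hp2]

theorem le_of_eq_bellmanStep {p2 n n' x y : ℝ} (hp10 : 0 ≤ p1) (hp11 : p1 < 1)
    (hp20 : 0 ≤ p2) (hp21 : p2 < 1) (hβ0 : 0 ≤ β) (hβ1 : β < 1)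
    (hx : x = bellmanStep p1 β n x y)
    (hy : y = max (bellmanStep (1 - p2) β n' x y) (bellmanStep p1 β n' x y))
    (hn : n ≤ Q - slope p1 β) (hn' : n' ≤ Q - slope p1 β + (1 - β)⁻¹) :
    x ≤ Q ∧ y ≤ Q + (1 - β)⁻¹ := by
  have hX := (bellmanStep_slope Q hp11 hβ1).le
  rcases max_choice (bellmanStep (1 - p2) β n' x y) (bellmanStep p1 β n' x y) with hmax | hmax
  · exact le_of_le_bellmanStep hp10 hp11 (by linarith) (by linarith) hβ0 hβ1 hx.le
      (hy.trans hmax).le hX (bellmanStep_slope_byzantine_le Q hp10 hp11 hp20 hβ1) hn hn'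
  · exact le_of_le_bellmanStep hp10 hp11 hp10 hp11.le hβ0 hβ1 hx.le
      (hy.trans hmax).le hX (bellmanStep_slope_honest_le Q hp10 hp11 hβ1) hn hn'

end Supersolution

end LengthBellman

open LengthBellman in
theorem length_bellman_linear_bound_general (v : ℕ) (p1 p2 β : ℝ)
    (hp10 : 0 ≤ p1) (hp11 : p1 < 1) (hp20 : 0 ≤ p2) (hp21 : p2 < 1)
    (hβ0 : 0 ≤ β) (hβ1 : β < 1)
    (q q' : ℕ → ℝ)
    (hqv : q v = 0) (hq'v : q' v = 0)
    (hqrec : ∀ i < v,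
      q i = 1 + (1 - p1) * q (i + 1) + p1 * β * q' i + p1 * (1 - β) * q i)
    (hq'rec : ∀ i < v,
      q' i = max (1 + p2 * q' (i + 1) + (1 - p2) * β * q' i + (1 - p2) * (1 - β) * q i)
        (1 + (1 - p1) * q' (i + 1) + p1 * β * q' i + p1 * (1 - β) * q i)) :
    ∀ i ≤ v, q i ≤ (1 + p1 / ((1 - p1) * (1 - β))) * ((v : ℝ) - i) := by
  suffices h : ∀ i ≤ v, q i ≤ slope p1 β * ((v : ℝ) - i) ∧
      q' i ≤ slope p1 β * ((v : ℝ) - i) + (1 - β)⁻¹ from fun i hi => (h i hi).1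
  have hx : ∀ k < v, q k = bellmanStep p1 β (q (k + 1)) (q k) (q' k) := by
    intro k hk; rw [bellmanStep_eq]; exact hqrec k hk
  have hy : ∀ k < v, q' k = max (bellmanStep (1 - p2) β (q' (k + 1)) (q k) (q' k))
      (bellmanStep p1 β (q' (k + 1)) (q k) (q' k)) := by
    intro k hk; rw [bellmanStep_eq, bellmanStep_eq, sub_sub_cancel]; exact hq'rec k hk
  intro i hi
  induction hi using Nat.decreasingInduction with
  | self => simp [hqv, hq'v, hβ1.le]
  | of_succ k hk ih =>
    have hshift : slope p1 β * ((v : ℝ) - (k + 1 : ℕ)) =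
        slope p1 β * ((v : ℝ) - k) - slope p1 β := by
      push_cast; ring
    rw [hshift] at ih
    exact le_of_eq_bellmanStep _ hp10 hp11 hp20 hp21 hβ0 hβ1 (hx k hk) (hy k hk) ih.1 ih.2

/-- Linear bound on `q` in the expected-length Bellman recursion. -/
theorem length_bellman_linear_bound (v : ℕ) (hv : 1 ≤ v) (p1 p2 β : ℝ)
    (hp10 : 0 ≤ p1) (hp11 : p1 < 1) (hp20 : 0 ≤ p2) (hp21 : p2 < 1)
    (hβ0 : 0 ≤ β) (hβ1 : β < 1)
    (q q' : ℕ → ℝ) (hq : ∀ i, 0 ≤ q i) (hq' : ∀ i, 0 ≤ q' i)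
    (hqv : q v = 0) (hq'v : q' v = 0)
    (hqrec : ∀ i < v,
      q i = 1 + (1 - p1) * q (i + 1) + p1 * β * q' i + p1 * (1 - β) * q i)
    (hq'rec : ∀ i < v,
      q' i = max (1 + p2 * q' (i + 1) + (1 - p2) * β * q' i + (1 - p2) * (1 - β) * q i)
        (1 + (1 - p1) * q' (i + 1) + p1 * β * q' i + p1 * (1 - β) * q i)) :
    ∀ i ≤ v, q i ≤ (1 + p1 / ((1 - p1) * (1 - β))) * ((v : ℝ) - i) :=
  length_bellman_linear_bound_general v p1 p2 β hp10 hp11 hp20 hp21 hβ0 hβ1 q q' hqv hq'v hqrec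
    hq'rec
end

section
/- Fix an integer v ≥ 1 and real numbers p1, p2, β with 0 ≤ p1 < 1, 0 ≤ p2 < 1, and 0 ≤ β < 1, and let q, q' be as in the expected-length Bellman recursion. Then (1−β) q(0) + β q'(0) ≤ (1 + p1/((1−p1)(1−β))) · v + β/(1−β). -/
/-!
Put `b = 1 / (1 - β)` and `a = 1 + p1 / ((1 - p1) (1 - β))`, and show by backward induction from the
boundary `v` that `q i ≤ a (v - i)` and `q' i ≤ a (v - i) + b`. The constants are chosen so that these
bounds solve the `q`-equation exactly and supersolve both branches of the `q'`-equation; hence the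
two errors at `i` satisfy `e ≤ M e` for a substochastic matrix `M` with `I - M` invertible, which
forces them to be nonpositive. Weighting the bounds at `i = 0` by `1 - β` and `β` gives `a v + β b`.
-/

theorem nonpos_of_le_substochastic {α γ δ ε s t : ℝ} (hγ : 0 ≤ γ) (hδ : 0 ≤ δ)
    (h₁ : α + γ < 1) (h₂ : δ + ε ≤ 1) (hε : ε < 1)
    (hs : s ≤ α * s + γ * t) (ht : t ≤ δ * s + ε * t) : s ≤ 0 ∧ t ≤ 0 := by
  have hdet : 0 < (1 - α) * (1 - ε) - γ * δ := by nlinarith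
  have hs' : ((1 - α) * (1 - ε) - γ * δ) * s ≤ 0 := by nlinarith
  have hs0 : s ≤ 0 := nonpos_of_mul_nonpos_right hs' hdet
  exact ⟨hs0, by nlinarith⟩

section BellmanBound

variable {p1 p2 β a b : ℝ}

theorem bellman_step_le (hp10 : 0 ≤ p1) (hp11 : p1 < 1) (hp20 : 0 ≤ p2) (hp21 : p2 < 1)
    (hβ0 : 0 ≤ β) (hβ1 : β < 1)
    (ha : (1 - p1) * a = 1 + p1 * β * b) (hb : (1 - β) * b = 1) {S x y X Y : ℝ}
    (hX : X ≤ S) (hY : Y ≤ S + b)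
    (hx : x = 1 + (1 - p1) * X + p1 * β * y + p1 * (1 - β) * x)
    (hy : y = max (1 + p2 * Y + (1 - p2) * β * y + (1 - p2) * (1 - β) * x)
        (1 + (1 - p1) * Y + p1 * β * y + p1 * (1 - β) * x)) :
    x ≤ S + a ∧ y ≤ S + a + b := by
  have hb0 : 0 ≤ b := by nlinarith
  have ha1 : 1 ≤ a := by nlinarith
  have hs : x - (S + a) ≤ p1 * (1 - β) * (x - (S + a)) + p1 * β * (y - (S + a + b)) := by
    nlinarith
  suffices x - (S + a) ≤ 0 ∧ y - (S + a + b) ≤ 0 by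
    exact ⟨sub_nonpos.mp this.1, sub_nonpos.mp this.2⟩
  rcases max_choice (1 + p2 * Y + (1 - p2) * β * y + (1 - p2) * (1 - β) * x)
      (1 + (1 - p1) * Y + p1 * β * y + p1 * (1 - β) * x) with h | h <;> rw [h] at hy
  · have ht : y - (S + a + b) ≤
        (1 - p2) * (1 - β) * (x - (S + a)) + (1 - p2) * β * (y - (S + a + b)) := by
      nlinarith [mul_le_mul_of_nonneg_left hY hp20, mul_le_mul_of_nonneg_left ha1 hp20]
    exact nonpos_of_le_substochastic (by positivity) (by positivity) (by linarith) (by linarith)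
      (by nlinarith) hs ht
  · have ht : y - (S + a + b) ≤ p1 * (1 - β) * (x - (S + a)) + p1 * β * (y - (S + a + b)) := by
      nlinarith [mul_le_mul_of_nonneg_left hY (sub_nonneg.mpr hp11.le)]
    exact nonpos_of_le_substochastic (by positivity) (by positivity) (by linarith) (by linarith)
      (by nlinarith) hs ht

theorem bellman_le_linear_from_boundary {v : ℕ}
    (hp10 : 0 ≤ p1) (hp11 : p1 < 1) (hp20 : 0 ≤ p2) (hp21 : p2 < 1)
    (hβ0 : 0 ≤ β) (hβ1 : β < 1)
    (ha : (1 - p1) * a = 1 + p1 * β * b) (hb : (1 - β) * b = 1)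
    {q q' : ℕ → ℝ} (hqv : q v = 0) (hq'v : q' v = 0)
    (hqrec : ∀ i < v,
      q i = 1 + (1 - p1) * q (i + 1) + p1 * β * q' i + p1 * (1 - β) * q i)
    (hq'rec : ∀ i < v,
      q' i = max (1 + p2 * q' (i + 1) + (1 - p2) * β * q' i + (1 - p2) * (1 - β) * q i)
        (1 + (1 - p1) * q' (i + 1) + p1 * β * q' i + p1 * (1 - β) * q i)) :
    ∀ k ≤ v, q (v - k) ≤ a * k ∧ q' (v - k) ≤ a * k + b := by
  intro k
  induction k with
  | zero =>
    intro _
    simp only [Nat.sub_zero, Nat.cast_zero, mul_zero, zero_add, hqv, hq'v, le_refl, true_and]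
    nlinarith
  | succ k ih =>
    intro hk
    obtain ⟨hX, hY⟩ := ih (by omega)
    have hi : v - (k + 1) < v := by omega
    have hi1 : v - (k + 1) + 1 = v - k := by omega
    have hx := hqrec _ hi
    have hy := hq'rec _ hi
    rw [hi1] at hx hy
    push_cast
    rw [mul_add, mul_one]
    exact bellman_step_le hp10 hp11 hp20 hp21 hβ0 hβ1 ha hb hX hY hx hy

end BellmanBound

theorem length_bellman_total_bound_general (v : ℕ) (p1 p2 β : ℝ)
    (hp10 : 0 ≤ p1) (hp11 : p1 < 1) (hp20 : 0 ≤ p2) (hp21 : p2 < 1)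
    (hβ0 : 0 ≤ β) (hβ1 : β < 1)
    (q q' : ℕ → ℝ)
    (hqv : q v = 0) (hq'v : q' v = 0)
    (hqrec : ∀ i < v,
      q i = 1 + (1 - p1) * q (i + 1) + p1 * β * q' i + p1 * (1 - β) * q i)
    (hq'rec : ∀ i < v,
      q' i = max (1 + p2 * q' (i + 1) + (1 - p2) * β * q' i + (1 - p2) * (1 - β) * q i)
        (1 + (1 - p1) * q' (i + 1) + p1 * β * q' i + p1 * (1 - β) * q i)) :
    (1 - β) * q 0 + β * q' 0 ≤
      (1 + p1 / ((1 - p1) * (1 - β))) * (v : ℝ) + β / (1 - β) := by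
  have hβ : 1 - β ≠ 0 := by linarith
  have hp1 : 1 - p1 ≠ 0 := by linarith
  set a := 1 + p1 / ((1 - p1) * (1 - β)) with ha_def
  have ha : (1 - p1) * a = 1 + p1 * β * (1 / (1 - β)) := by
    rw [ha_def]
    field_simp
    ring
  have hb : (1 - β) * (1 / (1 - β)) = 1 := mul_one_div_cancel hβ
  obtain ⟨h0, h0'⟩ := bellman_le_linear_from_boundary hp10 hp11 hp20 hp21 hβ0 hβ1 ha hb hqv hq'v
    hqrec hq'rec v le_rfl
  rw [Nat.sub_self] at h0 h0'
  calc (1 - β) * q 0 + β * q' 0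
      ≤ (1 - β) * (a * v) + β * (a * v + 1 / (1 - β)) := by gcongr
    _ = a * v + β / (1 - β) := by ring

/-- Bound on the expected total number of chunk transmissions `(1-β) q(0) + β q'(0)`. -/
theorem length_bellman_total_bound (v : ℕ) (hv : 1 ≤ v) (p1 p2 β : ℝ)
    (hp10 : 0 ≤ p1) (hp11 : p1 < 1) (hp20 : 0 ≤ p2) (hp21 : p2 < 1)
    (hβ0 : 0 ≤ β) (hβ1 : β < 1)
    (q q' : ℕ → ℝ) (hq : ∀ i, 0 ≤ q i) (hq' : ∀ i, 0 ≤ q' i)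
    (hqv : q v = 0) (hq'v : q' v = 0)
    (hqrec : ∀ i < v,
      q i = 1 + (1 - p1) * q (i + 1) + p1 * β * q' i + p1 * (1 - β) * q i)
    (hq'rec : ∀ i < v,
      q' i = max (1 + p2 * q' (i + 1) + (1 - p2) * β * q' i + (1 - p2) * (1 - β) * q i)
        (1 + (1 - p1) * q' (i + 1) + p1 * β * q' i + p1 * (1 - β) * q i)) :
    (1 - β) * q 0 + β * q' 0 ≤
      (1 + p1 / ((1 - p1) * (1 - β))) * (v : ℝ) + β / (1 - β) :=
  length_bellman_total_bound_general v p1 p2 β hp10 hp11 hp20 hp21 hβ0 hβ1 q q' hqv hq'v hqrec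
    hq'rec
end
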